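/- arXiv:1001.0001 — 8 statements merged into one kernel-verified Lean document; each statement's English description precedes it below -/
import Mathlib

section
/- Let q be a prime power and let m > r ≥ 1 be integers; set n = (q^m − 1)/(q − 1), t = (q^r − 1)/(q − 1), l = q^{m−r}, and n_0 = (q^{m−r} − 1)/(q − 1), so that n = l·t + n_0. Identify F_q^n with (F_q^l)^t × F_q^{n_0} and, for l-ary quasigroups σ_1, …, σ_t of order q on F_q, define σ̄(x) = (σ_1(x̄_1), …, σ_t(x̄_t)) where x̄_1, …, x̄_t are the t blocks of length l of x. Let C* ⊆ F_q^t be a perfect code, and suppose that for every μ ∈ C* we are given a code K_μ ⊆ F_q^n with minimum Hamming distance at least 3 and cardinality q^{n − m − (t − r)} such that σ̄(x) = μ for every x ∈ K_μ. Then C = ⋃_{μ ∈ C*} K_μ is a perfect code in F_q^n. -/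
/-- A perfect 1-error-correcting code: every word of the ambient space is within
Hamming distance 1 of exactly one codeword. -/
def IsPerfectCode {ι α : Type*} [Fintype ι] [DecidableEq α] (C : Set (ι → α)) : Prop :=
  ∀ x : ι → α, ∃! c, c ∈ C ∧ hammingDist x c ≤ 1

/-- An `ι`-ary quasigroup: a function `f : (ι → S) → S` that is bijective in each
argument when the other arguments are fixed. -/
def IsMultiQuasigroup {ι S : Type*} [DecidableEq ι] (f : (ι → S) → S) : Prop :=
  ∀ (i : ι) (x : ι → S), Function.Bijective fun a => f (Function.update x i a)

/-! Each coordinate of `σ̄` reads only its own block, so `σ̄` does not increase Hamming distance.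
Codewords of `K μ` and `K μ'` with `μ ≠ μ'` are therefore at distance at least `d(μ, μ') ≥ 3`, and
the union has minimum distance 3. The `K μ` are disjoint fibers of `σ̄`, so the union has
`q^(t-r) · q^(n-m-(t-r)) = q^(n-m)` words: a distance-3 code meeting the sphere-packing bound is
perfect. -/

open Function Finset

section HammingBall

variable {ι α : Type*} [Fintype ι] [DecidableEq ι] [DecidableEq α]

theorem hammingDist_update_le_one (y : ι → α) (i : ι) (a : α) :
    hammingDist (update y i a) y ≤ 1 :=
  calc hammingDist (update y i a) y ≤ #{i} := card_le_card fun _ hj =>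
        mem_singleton.2 <| by_contra fun hji => (mem_filter.1 hj).2 (update_of_ne hji a y)
    _ = 1 := card_singleton i

theorem hammingDist_le_one_iff {x y : ι → α} :
    hammingDist x y ≤ 1 ↔ x = y ∨ ∃ i, ∃ a ≠ y i, x = update y i a := by
  refine ⟨fun h => ?_, ?_⟩
  · rcases Nat.le_one_iff_eq_zero_or_eq_one.1 h with h0 | h1
    · exact .inl (hammingDist_eq_zero.1 h0)
    obtain ⟨i, hi⟩ := card_eq_one.1 h1
    have hdiff : ∀ j, x j ≠ y j ↔ j = i := fun j => by
      simpa using congrArg (j ∈ ·) hi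
    refine .inr ⟨i, x i, (hdiff i).2 rfl, funext fun j => ?_⟩
    obtain rfl | hji := eq_or_ne j i
    · simp
    · rw [update_of_ne hji]
      exact not_not.1 (mt (hdiff j).1 hji)
  · rintro (rfl | ⟨i, a, -, rfl⟩)
    · simp
    · exact hammingDist_update_le_one y i a

theorem card_hammingBall_one [Fintype α] (c : ι → α) :
    Nat.card {y : ι → α // hammingDist y c ≤ 1} = 1 + Fintype.card ι * (Fintype.card α - 1) := by
  let e : Option (Σ i, {a : α // a ≠ c i}) → (ι → α) :=
    fun p => p.elim c fun q => update c q.1 q.2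
  have he : Injective e := by
    rintro (_ | ⟨i, a, ha⟩) (_ | ⟨j, b, hb⟩) h
    · rfl
    · exact absurd (congrFun h j) (by simpa [e] using hb.symm)
    · exact absurd (congrFun h i) (by simpa [e] using ha)
    · obtain rfl | hij := eq_or_ne i j
      · obtain rfl : a = b := update_injective c i h
        rfl
      · exact absurd (congrFun h i) (by simpa [e, update_of_ne hij] using ha)
  have hrange : Set.range e = {y | hammingDist y c ≤ 1} := by
    ext y
    rw [Set.mem_ofPred_eq, hammingDist_le_one_iff]
    constructor
    · rintro ⟨_ | ⟨i, a, ha⟩, rfl⟩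
      exacts [.inl rfl, .inr ⟨i, a, ha, rfl⟩]
    · rintro (rfl | ⟨i, a, ha, rfl⟩)
      exacts [⟨none, rfl⟩, ⟨some ⟨i, a, ha⟩, rfl⟩]
  rw [← Set.coe_ofPred, ← hrange, Nat.card_range_of_injective he]
  simp [Nat.card_eq_fintype_card, Fintype.card_subtype_compl, add_comm]

theorem exists_hammingDist_le_one_of_le_two {x y : ι → α} (h : hammingDist x y ≤ 2) :
    ∃ w, hammingDist w x ≤ 1 ∧ hammingDist w y ≤ 1 := by
  obtain rfl | hxy := eq_or_ne x y
  · exact ⟨x, by simp, by simp⟩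
  obtain ⟨i, hi⟩ := Function.ne_iff.1 hxy
  refine ⟨update x i (y i), hammingDist_update_le_one x i (y i), ?_⟩
  have hsub : ({j | update x i (y i) j ≠ y j} : Finset ι) ⊆
      ({j | x j ≠ y j} : Finset ι).erase i := by
    intro j hj
    obtain rfl | hji := eq_or_ne j i
    · simp at hj
    · simpa [hji, update_of_ne hji] using hj
  calc hammingDist (update x i (y i)) y ≤ #(({j | x j ≠ y j} : Finset ι).erase i) :=
        card_le_card hsub
    _ = hammingDist x y - 1 := card_erase_of_mem (by simpa using hi)
    _ ≤ 1 := by omega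

end HammingBall

section PerfectCode

variable {ι α : Type*} [Fintype ι] [DecidableEq α]

def ballMap (C : Set (ι → α)) : (Σ c : C, {y : ι → α // hammingDist y c ≤ 1}) → (ι → α) :=
  fun p => p.2

theorem isPerfectCode_iff_bijective_ballMap {C : Set (ι → α)} :
    IsPerfectCode C ↔ Bijective (ballMap C) := by
  refine ⟨fun hC => ⟨?_, fun x => ?_⟩, fun ⟨hinj, hsurj⟩ x => ?_⟩
  · rintro ⟨c, y, hy⟩ ⟨c', y', hy'⟩ (rfl : y = y')
    obtain rfl : c = c' := Subtype.ext ((hC y).unique ⟨c.2, hy⟩ ⟨c'.2, hy'⟩)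
    rfl
  · obtain ⟨c, ⟨hc, hx⟩, -⟩ := hC x
    exact ⟨⟨⟨c, hc⟩, x, hx⟩, rfl⟩
  · obtain ⟨⟨c, y, hy⟩, rfl : y = x⟩ := hsurj x
    exact ⟨c, ⟨c.2, hy⟩, fun c' ⟨hc', hy'⟩ =>
      congrArg (fun p => p.1.1) (@hinj ⟨⟨c', hc'⟩, y, hy'⟩ ⟨c, y, hy⟩ rfl)⟩

theorem injective_ballMap {C : Set (ι → α)} (hC : C.Pairwise (3 ≤ hammingDist · ·)) :
    Injective (ballMap C) := by
  rintro ⟨c, y, hy⟩ ⟨c', y', hy'⟩ (rfl : y = y')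
  obtain rfl : c = c' := Subtype.ext <| by_contra fun hne => by
    have := hC c.2 c'.2 hne
    have := hammingDist_triangle_left (c : ι → α) c' y
    omega
  rfl

theorem IsPerfectCode.pairwise [DecidableEq ι] {C : Set (ι → α)} (hC : IsPerfectCode C) :
    C.Pairwise (3 ≤ hammingDist · ·) := by
  intro c hc c' hc' hne
  by_contra! hlt
  obtain ⟨w, hwc, hwc'⟩ := exists_hammingDist_le_one_of_le_two (by omega : hammingDist c c' ≤ 2)
  exact hne ((hC w).unique ⟨hc, hwc⟩ ⟨hc', hwc'⟩)

variable [DecidableEq ι] [Fintype α]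

theorem card_sigma_hammingBall_one (C : Set (ι → α)) :
    Nat.card (Σ c : C, {y : ι → α // hammingDist y c ≤ 1}) =
      C.ncard * (1 + Fintype.card ι * (Fintype.card α - 1)) := by
  have : Fintype C := Fintype.ofFinite C
  rw [Nat.card_sigma]
  simp only [card_hammingBall_one, sum_const, card_univ, smul_eq_mul, ← Nat.card_eq_fintype_card,
    Nat.card_coe_set_eq]

theorem isPerfectCode_of_ncard {C : Set (ι → α)} (hC : C.Pairwise (3 ≤ hammingDist · ·))
    (hcard : C.ncard * (1 + Fintype.card ι * (Fintype.card α - 1)) =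
      Fintype.card α ^ Fintype.card ι) :
    IsPerfectCode C :=
  isPerfectCode_iff_bijective_ballMap.2 <| (injective_ballMap hC).bijective_of_nat_card_le <| by
    simp [card_sigma_hammingBall_one, hcard]

theorem IsPerfectCode.ncard_mul {C : Set (ι → α)} (hC : IsPerfectCode C) :
    C.ncard * (1 + Fintype.card ι * (Fintype.card α - 1)) = Fintype.card α ^ Fintype.card ι := by
  rw [← card_sigma_hammingBall_one,
    Nat.card_eq_of_bijective _ (isPerfectCode_iff_bijective_ballMap.1 hC)]
  simp

end PerfectCode

section Blocks

variable {ι κ ν α β : Type*} [Fintype ι] [Fintype κ] [DecidableEq α]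

theorem hammingDist_comp_le_of_injective {e : κ → ι} (he : Injective e) (x y : ι → α) :
    hammingDist (x ∘ e) (y ∘ e) ≤ hammingDist x y :=
  card_le_card_of_injOn e (fun _ hk => by simpa using hk) he.injOn

theorem hammingDist_curry_le (x y : ι × κ → α) :
    hammingDist (fun i j => x (i, j)) (fun i j => y (i, j)) ≤ hammingDist x y :=
  card_le_card_of_surjOn Prod.fst fun i hi => by
    obtain ⟨j, hj⟩ := Function.ne_iff.1 (mem_filter.1 hi).2
    exact ⟨(i, j), by simpa using hj, rfl⟩

theorem hammingDist_blockwise_le [Fintype ν] [DecidableEq β] (σ : ι → (κ → α) → β)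
    (x y : (ι × κ) ⊕ ν → α) :
    hammingDist (fun i => σ i fun j => x (.inl (i, j))) (fun i => σ i fun j => y (.inl (i, j))) ≤
      hammingDist x y :=
  calc _ ≤ hammingDist (fun i j => x (.inl (i, j))) (fun i j => y (.inl (i, j))) :=
        hammingDist_comp_le_hammingDist σ
    _ ≤ hammingDist (x ∘ .inl) (y ∘ .inl) := hammingDist_curry_le (x ∘ .inl) (y ∘ .inl)
    _ ≤ hammingDist x y := hammingDist_comp_le_of_injective Sum.inl_injective x y

end Blocks

theorem pairwise_biUnion_of_hammingDist_le {ι κ α β : Type*} [Fintype ι] [Fintype κ]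
    [DecidableEq α] [DecidableEq β] {φ : (ι → α) → (κ → β)}
    (hφ : ∀ x y, hammingDist (φ x) (φ y) ≤ hammingDist x y) {Cstar : Set (κ → β)}
    {K : (κ → β) → Set (ι → α)} (hKφ : ∀ μ ∈ Cstar, ∀ x ∈ K μ, φ x = μ)
    (hCstar : Cstar.Pairwise (3 ≤ hammingDist · ·))
    (hK : ∀ μ ∈ Cstar, (K μ).Pairwise (3 ≤ hammingDist · ·)) :
    (⋃ μ ∈ Cstar, K μ).Pairwise (3 ≤ hammingDist · ·) := by
  intro x hx y hy hxy
  obtain ⟨μ, hμ, hx⟩ := Set.mem_iUnion₂.1 hx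
  obtain ⟨ν, hν, hy⟩ := Set.mem_iUnion₂.1 hy
  obtain rfl | hμν := eq_or_ne μ ν
  · exact hK μ hμ hx hy hxy
  calc 3 ≤ hammingDist μ ν := hCstar hμ hν hμν
    _ = hammingDist (φ x) (φ y) := by rw [hKφ μ hμ x hx, hKφ ν hν y hy]
    _ ≤ hammingDist x y := hφ x y

theorem ncard_biUnion_of_subset_fiber {X Y : Type*} [Finite X] [Finite Y] {φ : X → Y}
    {Cstar : Set Y} {K : Y → Set X} (hKφ : ∀ μ ∈ Cstar, ∀ x ∈ K μ, φ x = μ) {k : ℕ}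
    (hK : ∀ μ ∈ Cstar, (K μ).ncard = k) :
    (⋃ μ ∈ Cstar, K μ).ncard = Cstar.ncard * k := by
  have hdisj : Cstar.PairwiseDisjoint K := fun μ hμ ν hν hne =>
    Set.disjoint_left.2 fun x hxμ hxν => hne ((hKφ μ hμ x hxμ).symm.trans (hKφ ν hν x hxν))
  rw [Cstar.toFinite.ncard_biUnion (fun _ _ => Set.toFinite _) hdisj, finsum_mem_congr rfl hK,
    finsum_mem_eq_finite_toFinset_sum _ Cstar.toFinite, sum_const, smul_eq_mul,
    Set.ncard_eq_toFinset_card]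

section GeometricSum

variable {q : ℕ}

theorem one_add_pow_sub_one_div_mul (hq : 0 < q) (k : ℕ) :
    1 + (q ^ k - 1) / (q - 1) * (q - 1) = q ^ k := by
  rw [Nat.div_mul_cancel (by simpa using Nat.sub_dvd_pow_sub_pow q 1 k)]
  have := Nat.one_le_pow k q hq
  omega

theorem le_pow_sub_one_div (hq : 2 ≤ q) (k : ℕ) : k ≤ (q ^ k - 1) / (q - 1) := by
  rw [← Nat.geomSum_eq hq]
  simpa using sum_le_sum fun i (_ : i ∈ range k) => Nat.one_le_pow i q (by omega)

theorem pow_add_sub_one_div (hq : 2 ≤ q) (a b : ℕ) :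
    (q ^ (a + b) - 1) / (q - 1) = q ^ a * ((q ^ b - 1) / (q - 1)) + (q ^ a - 1) / (q - 1) := by
  rw [← Nat.geomSum_eq hq, ← Nat.geomSum_eq hq, ← Nat.geomSum_eq hq, sum_range_add, mul_sum,
    add_comm]
  simp only [pow_add]

end GeometricSum

/-- Words of `F_q^n` are identified with functions on `(Fin t × Fin l) ⊕ Fin n₀`, i.e. `t` blocks
of length `l = q^(m-r)` followed by `n₀` remaining coordinates. -/
theorem stmt_1_general {q m r n t l n0 : ℕ} (F : Type*) [Field F] [Fintype F] [DecidableEq F]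
    (hq : Fintype.card F = q) (hmr : r < m)
    (hn : n = (q ^ m - 1) / (q - 1)) (ht : t = (q ^ r - 1) / (q - 1))
    (hl : l = q ^ (m - r)) (hn0 : n0 = (q ^ (m - r) - 1) / (q - 1))
    (σ : Fin t → ((Fin l → F) → F))
    (Cstar : Set (Fin t → F)) (hCstar : IsPerfectCode Cstar)
    (K : (Fin t → F) → Set ((Fin t × Fin l) ⊕ Fin n0 → F))
    (hKdist : ∀ μ ∈ Cstar, ∀ x ∈ K μ, ∀ y ∈ K μ, x ≠ y → 3 ≤ hammingDist x y)
    (hKcard : ∀ μ ∈ Cstar, (K μ).ncard = q ^ (n - m - (t - r)))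
    (hKσ : ∀ μ ∈ Cstar, ∀ x ∈ K μ,
      (fun i => σ i (fun j => x (Sum.inl (i, j)))) = μ) :
    IsPerfectCode (⋃ μ ∈ Cstar, K μ) := by
  have hq2 : 2 ≤ q := hq ▸ Fintype.one_lt_card
  have hball_t : 1 + t * (q - 1) = q ^ r := ht ▸ one_add_pow_sub_one_div_mul (by omega) r
  have hball_n : 1 + n * (q - 1) = q ^ m := hn ▸ one_add_pow_sub_one_div_mul (by omega) m
  have hsplit : n = l * t + n0 := by
    rw [hn, hl, ht, hn0, ← pow_add_sub_one_div hq2, Nat.sub_add_cancel hmr.le]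
  have hrt : r ≤ t := ht ▸ le_pow_sub_one_div hq2 r
  have hmn0 : m - r ≤ n0 := hn0 ▸ le_pow_sub_one_div hq2 (m - r)
  have htl : t ≤ l * t := Nat.le_mul_of_pos_left t (hl ▸ Nat.pow_pos (by omega))
  have hCstar_card : Cstar.ncard = q ^ (t - r) := by
    have h := hCstar.ncard_mul
    rw [Fintype.card_fin, hq, hball_t, ← pow_sub_mul_pow q hrt] at h
    exact Nat.eq_of_mul_eq_mul_right (Nat.pow_pos (by omega)) h
  refine isPerfectCode_of_ncard (pairwise_biUnion_of_hammingDist_le (hammingDist_blockwise_le σ)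
    hKσ hCstar.pairwise hKdist) ?_
  rw [ncard_biUnion_of_subset_fiber hKσ hKcard, hCstar_card, Fintype.card_sum, Fintype.card_prod,
    Fintype.card_fin, Fintype.card_fin, Fintype.card_fin, hq, mul_comm t, ← hsplit, hball_n,
    ← pow_add, ← pow_add]
  congr 1
  -- the truncated subtractions are exact, since `n = l * t + n0 ≥ t + (m - r)`
  omega

/-- The combining construction: the union over an outer perfect code `C*` of
`μ`-components (distance-3 codes of the right cardinality satisfying the generalized
parity-check law `σ̄(x) = μ`) is a perfect code.  Words of `F_q^n` are identified with
functions on `(Fin t × Fin l) ⊕ Fin n₀`, i.e. `t` blocks of length `l = q^(m-r)`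
followed by `n₀` remaining coordinates. -/
theorem stmt_1 {q m r n t l n0 : ℕ} (F : Type*) [Field F] [Fintype F] [DecidableEq F]
    (hq : Fintype.card F = q) (hr : 1 ≤ r) (hmr : r < m)
    (hn : n = (q ^ m - 1) / (q - 1)) (ht : t = (q ^ r - 1) / (q - 1))
    (hl : l = q ^ (m - r)) (hn0 : n0 = (q ^ (m - r) - 1) / (q - 1))
    (σ : Fin t → ((Fin l → F) → F)) (hσ : ∀ i, IsMultiQuasigroup (σ i))
    (Cstar : Set (Fin t → F)) (hCstar : IsPerfectCode Cstar)
    (K : (Fin t → F) → Set ((Fin t × Fin l) ⊕ Fin n0 → F))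
    (hKdist : ∀ μ ∈ Cstar, ∀ x ∈ K μ, ∀ y ∈ K μ, x ≠ y → 3 ≤ hammingDist x y)
    (hKcard : ∀ μ ∈ Cstar, (K μ).ncard = q ^ (n - m - (t - r)))
    (hKσ : ∀ μ ∈ Cstar, ∀ x ∈ K μ,
      (fun i => σ i (fun j => x (Sum.inl (i, j)))) = μ) :
    IsPerfectCode (⋃ μ ∈ Cstar, K μ) :=
  stmt_1_general F hq hmr hn ht hl hn0 σ Cstar hCstar K hKdist hKcard hKσ
end

section
/- Let q be a prime power and k, t positive integers, and set n = (q−1)kt + k + t. Identify F_q^n with words (x̄_{11} | … | x̄_{1k} | y_1 | … | x̄_{t1} | … | x̄_{tk} | y_t | z_1 | … | z_k) where each x̄_{ij} ∈ F_q^{q−1} and y_i, z_j ∈ F_q. Let μ ∈ F_q^t, let C^# ⊆ F_q^k be a perfect code, let v and h be (q−1)-ary quasigroups of order q on F_q such that {(ȳ | v(ȳ) | h(ȳ)) : ȳ ∈ F_q^{q−1}} is a perfect code in F_q^{q+1}, let V_1, …, V_t be (k+1)-ary quasigroups of order q on F_q, and let H_1, …, H_k be (t+1)-ary quasigroups of order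 q on F_q. Define K_μ as the set of all such words satisfying (V_1(v(x̄_{11}), …, v(x̄_{1k}), y_1), …, V_t(v(x̄_{t1}), …, v(x̄_{tk}), y_t)) = μ and (H_1(h(x̄_{11}), …, h(x̄_{t1}), z_1), …, H_k(h(x̄_{1k}), …, h(x̄_{tk}), z_k)) ∈ C^#. Then: (i) the cardinality of K_μ equals q^{(q−1)kt} · |C^#|; (ii) for each i, the function σ_i defined on the i-th block by σ_i(x̄_{i1}, …, x̄_{ik}, y_i) = V_i(v(x̄_{i1}), …, v(x̄_{ik}), y_i) is an ((q−1)k+1)-ary quasigroup of order q, and every x ∈ K_μ satisfies (σ_1(block_1 of x), …, σ_t(block_t of x)) = μ. -/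
noncomputable def lastEquiv {n : ℕ} {S : Type*} (f : (Fin (n + 1) → S) → S)
    (hf : IsMultiQuasigroup f) (g : Fin n → S) (s0 : S) : S ≃ S :=
  Equiv.ofBijective _ (hf (Fin.last n) (Fin.snoc g s0))

lemma lastEquiv_apply {n : ℕ} {S : Type*} (f : (Fin (n + 1) → S) → S)
    (hf : IsMultiQuasigroup f) (g : Fin n → S) (s0 a : S) :
    lastEquiv f hf g s0 a = f (Fin.snoc g a) := by
  simp only [lastEquiv, Equiv.ofBijective_apply, Fin.update_snoc_last]

lemma lastEquiv_symm {n : ℕ} {S : Type*} (f : (Fin (n + 1) → S) → S)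
    (hf : IsMultiQuasigroup f) (g : Fin n → S) (s0 m : S) :
    f (Fin.snoc g ((lastEquiv f hf g s0).symm m)) = m := by
  rw [← lastEquiv_apply f hf g s0, Equiv.apply_symm_apply]

lemma lastEquiv_symm_eq {n : ℕ} {S : Type*} (f : (Fin (n + 1) → S) → S)
    (hf : IsMultiQuasigroup f) (g : Fin n → S) (s0 m a : S)
    (H : f (Fin.snoc g a) = m) : (lastEquiv f hf g s0).symm m = a := by
  rw [Equiv.symm_apply_eq, lastEquiv_apply, H]

/-- Cardinality and generalized parity-check law for the Mollard–Phelps `μ`-component.  Words of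
length `(q-1)kt + t + k` are identified with functions on
`(Fin t × Fin k × Fin (q-1)) ⊕ (Fin t ⊕ Fin k)`: the blocks `x̄ᵢⱼ ∈ F_q^{q-1}`,
the coordinates `yᵢ`, and the coordinates `zⱼ`. -/
theorem stmt_3 {q k t : ℕ} (F : Type*) [Field F] [Fintype F] [DecidableEq F]
    (hq : Fintype.card F = q) (hk : 1 ≤ k) (ht : 1 ≤ t)
    (μ : Fin t → F)
    (Csharp : Set (Fin k → F)) (hCsharp : IsPerfectCode Csharp)
    (v h : (Fin (q - 1) → F) → F)
    (hv : IsMultiQuasigroup v) (hh : IsMultiQuasigroup h)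
    (hvh : IsPerfectCode {w : Fin (q - 1) ⊕ Fin 2 → F |
      w (Sum.inr 0) = v (fun a => w (Sum.inl a)) ∧
      w (Sum.inr 1) = h (fun a => w (Sum.inl a))})
    (V : Fin t → ((Fin (k + 1) → F) → F)) (hV : ∀ i, IsMultiQuasigroup (V i))
    (H : Fin k → ((Fin (t + 1) → F) → F)) (hH : ∀ j, IsMultiQuasigroup (H j))
    (Kmu : Set ((Fin t × Fin k × Fin (q - 1)) ⊕ (Fin t ⊕ Fin k) → F))
    (hKmu : Kmu = {w |
      (∀ i : Fin t,
        V i (Fin.snoc (fun j => v (fun a => w (Sum.inl (i, j, a))))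
          (w (Sum.inr (Sum.inl i)))) = μ i) ∧
      (fun j : Fin k =>
        H j (Fin.snoc (fun i => h (fun a => w (Sum.inl (i, j, a))))
          (w (Sum.inr (Sum.inr j))))) ∈ Csharp}) :
    -- (i) cardinality of K_μ
    Kmu.ncard = q ^ ((q - 1) * k * t) * Csharp.ncard ∧
    -- (ii) each σᵢ is a ((q-1)k+1)-ary quasigroup ...
    (∀ i : Fin t, IsMultiQuasigroup
      (fun u : (Fin k × Fin (q - 1)) ⊕ Unit → F =>
        V i (Fin.snoc (fun j => v (fun a => u (Sum.inl (j, a)))) (u (Sum.inr ()))))) ∧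
    -- ... and every x ∈ K_μ satisfies σᵢ(i-th block of x) = μᵢ
    (∀ w ∈ Kmu, ∀ i : Fin t,
      V i (Fin.snoc (fun j => v (fun a => w (Sum.inl (i, j, a))))
        (w (Sum.inr (Sum.inl i)))) = μ i) := by
  have hmem : ∀ w : (Fin t × Fin k × Fin (q - 1)) ⊕ (Fin t ⊕ Fin k) → F,
      w ∈ Kmu ↔
      ((∀ i : Fin t,
        V i (Fin.snoc (fun j => v (fun a => w (Sum.inl (i, j, a))))
          (w (Sum.inr (Sum.inl i)))) = μ i) ∧
      (fun j : Fin k =>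
        H j (Fin.snoc (fun i => h (fun a => w (Sum.inl (i, j, a))))
          (w (Sum.inr (Sum.inr j))))) ∈ Csharp) := by
    intro w; rw [hKmu]; exact Iff.rfl
  refine ⟨?_, ?_, ?_⟩
  · -- cardinality
    have e : ↥Kmu ≃ ((Fin t × Fin k × Fin (q - 1)) → F) × ↥Csharp :=
      { toFun := fun w => ⟨fun p => w.1 (Sum.inl p),
          ⟨fun j => H j (Fin.snoc (fun i => h (fun a => w.1 (Sum.inl (i, j, a))))
            (w.1 (Sum.inr (Sum.inr j)))), ((hmem _).1 w.2).2⟩⟩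
        invFun := fun xc => ⟨Sum.elim xc.1 (Sum.elim
            (fun i => (lastEquiv (V i) (hV i)
              (fun j => v (fun a => xc.1 (i, j, a))) 0).symm (μ i))
            (fun j => (lastEquiv (H j) (hH j)
              (fun i => h (fun a => xc.1 (i, j, a))) 0).symm (xc.2.1 j))), by
          rw [hmem]
          constructor
          · intro i
            exact lastEquiv_symm (V i) (hV i) _ 0 (μ i)
          · have hfun : ∀ j : Fin k,
                H j (Fin.snoc (fun i => h (fun a => (Sum.elim xc.1 (Sum.elim
                    (fun i => (lastEquiv (V i) (hV i)
                      (fun j => v (fun a => xc.1 (i, j, a))) 0).symm (μ i))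
                    (fun j => (lastEquiv (H j) (hH j)
                      (fun i => h (fun a => xc.1 (i, j, a))) 0).symm (xc.2.1 j))))
                    (Sum.inl (i, j, a))))
                  ((Sum.elim xc.1 (Sum.elim
                    (fun i => (lastEquiv (V i) (hV i)
                      (fun j => v (fun a => xc.1 (i, j, a))) 0).symm (μ i))
                    (fun j => (lastEquiv (H j) (hH j)
                      (fun i => h (fun a => xc.1 (i, j, a))) 0).symm (xc.2.1 j))))
                    (Sum.inr (Sum.inr j)))) = xc.2.1 j := by
              intro j
              exact lastEquiv_symm (H j) (hH j) _ 0 (xc.2.1 j)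
            have : (fun j : Fin k =>
                H j (Fin.snoc (fun i => h (fun a => (Sum.elim xc.1 (Sum.elim
                    (fun i => (lastEquiv (V i) (hV i)
                      (fun j => v (fun a => xc.1 (i, j, a))) 0).symm (μ i))
                    (fun j => (lastEquiv (H j) (hH j)
                      (fun i => h (fun a => xc.1 (i, j, a))) 0).symm (xc.2.1 j))))
                    (Sum.inl (i, j, a))))
                  ((Sum.elim xc.1 (Sum.elim
                    (fun i => (lastEquiv (V i) (hV i)
                      (fun j => v (fun a => xc.1 (i, j, a))) 0).symm (μ i))
                    (fun j => (lastEquiv (H j) (hH j)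
                      (fun i => h (fun a => xc.1 (i, j, a))) 0).symm (xc.2.1 j))))
                    (Sum.inr (Sum.inr j))))) = xc.2.1 := funext hfun
            rw [this]
            exact xc.2.2⟩
        left_inv := by
          intro w
          have hw := (hmem _).1 w.2
          apply Subtype.ext
          funext p
          rcases p with p | p
          · rfl
          · rcases p with i | j
            · exact lastEquiv_symm_eq (V i) (hV i) _ 0 _ _ (hw.1 i)
            · exact lastEquiv_symm_eq (H j) (hH j) _ 0 _ _ rfl
        right_inv := by
          intro xc
          refine Prod.ext rfl (Subtype.ext ?_)
          funext j
          exact lastEquiv_symm (H j) (hH j) _ 0 (xc.2.1 j) }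
    have hcard : Fintype.card (Fin t × Fin k × Fin (q - 1)) = (q - 1) * k * t := by
      simp only [Fintype.card_prod, Fintype.card_fin]
      ring
    rw [← Nat.card_coe_set_eq Kmu, Nat.card_congr e, Nat.card_prod,
      Nat.card_eq_fintype_card, Fintype.card_fun, hq, hcard, Nat.card_coe_set_eq]
  · -- quasigroup property
    intro i c u
    rcases c with ⟨j, a0⟩ | ⟨⟩
    · -- inner coordinate
      have key : (fun a => V i (Fin.snoc
            (fun j' => v (fun b => Function.update u (Sum.inl (j, a0)) a (Sum.inl (j', b))))
            (Function.update u (Sum.inl (j, a0)) a (Sum.inr ())))) =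
          (fun s => V i (Function.update
            (Fin.snoc (fun j' => v (fun b => u (Sum.inl (j', b)))) (u (Sum.inr ())))
            j.castSucc s)) ∘
          (fun a => v (Function.update (fun b => u (Sum.inl (j, b))) a0 a)) := by
        funext a
        simp only [Function.comp_apply]
        have hG : (fun j' : Fin k =>
            v (fun b => Function.update u (Sum.inl (j, a0)) a (Sum.inl (j', b)))) =
            Function.update (fun j' => v (fun b => u (Sum.inl (j', b)))) j
              (v (Function.update (fun b => u (Sum.inl (j, b))) a0 a)) := by
          funext j'
          rcases eq_or_ne j' j with rfl | hj
          · rw [Function.update_self]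
            congr 1
            funext b
            rcases eq_or_ne b a0 with rfl | hb
            · rw [Function.update_self, Function.update_self]
            · rw [Function.update_of_ne hb, Function.update_of_ne (by simp [hb])]
          · rw [Function.update_of_ne hj]
            congr 1
            funext b
            rw [Function.update_of_ne (by simp [hj])]
        have hy : Function.update u (Sum.inl (j, a0)) a (Sum.inr ()) = u (Sum.inr ()) :=
          Function.update_of_ne (by simp) _ _
        rw [hG, hy, Fin.snoc_update]
      exact key ▸ (hV i j.castSucc _).comp (hv a0 _)
    · -- last coordinate
      have key : (fun a => V i (Fin.snoc
            (fun j' => v (fun b => Function.update u (Sum.inr ()) a (Sum.inl (j', b))))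
            (Function.update u (Sum.inr ()) a (Sum.inr ())))) =
          (fun a => V i (Function.update
            (Fin.snoc (fun j' => v (fun b => u (Sum.inl (j', b)))) (u (Sum.inr ())))
            (Fin.last k) a)) := by
        funext a
        have hG : (fun j' : Fin k =>
            v (fun b => Function.update u (Sum.inr ()) a (Sum.inl (j', b)))) =
            (fun j' => v (fun b => u (Sum.inl (j', b)))) := by
          funext j'
          exact congrArg v (funext fun b => Function.update_of_ne (by simp) _ _)
        rw [hG, Function.update_self, Fin.update_snoc_last]
      exact key ▸ hV i (Fin.last k) _
  · -- parity-check law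
    intro w hw i
    exact ((hmem w).1 hw).1 i
end

section
/- Let q be a prime power and k, t positive integers, and set n = (q−1)kt + k + t. Identify F_q^n with words (x̄_{11} | … | x̄_{1k} | y_1 | … | x̄_{t1} | … | x̄_{tk} | y_t | z_1 | … | z_k) where each x̄_{ij} ∈ F_q^{q−1} and y_i, z_j ∈ F_q. Let μ ∈ F_q^t. For each i = 1, …, t+1 let C_{i,0}, C_{i,1}, …, C_{i,qk−k} be a partition of F_q^k into qk − k + 1 perfect codes, with partition function γ_i : F_q^k → {0, 1, …, qk−k} defined by γ_i(ȳ) = j iff ȳ ∈ C_{i,j}. Let v and h be (q−1)-ary quasigroups of order q on F_q such that {(ȳ | v(ȳ) | h(ȳ)) : ȳ ∈ F_q^{q−1}} is a perfect code in F_q^{q+1}, let V_1, …, V_t be (k+1)-ary quasigroups of order q on F_q, and let Q be a t-ary quasigroup of order qk − k + 1 on {0, 1, …, qk−k}. Define K_μ as the set of all such words satisfying (V_1(v(x̄_{11}), …, v(x̄_{1k}), y_1), …, V_t(v(x̄_{t1}), …, v(x̄_{tk}), y_t)) = μ and Q(γ_1(h(x̄_{11}), …, h(x̄_{1k})), …,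 γ_t(h(x̄_{t1}), …, h(x̄_{tk}))) = γ_{t+1}(z_1, …, z_k). Then K_μ has minimum Hamming distance at least 3. -/
set_option linter.unusedSectionVars false
set_option linter.unusedVariables false
set_option maxHeartbeats 1000000


namespace Stmt4Aux


lemma dist_le_one_of_agree {ι α : Type*} [Fintype ι] [DecidableEq ι] [DecidableEq α]
    {f g : ι → α} (p : ι) (h : ∀ c, c ≠ p → f c = g c) : hammingDist f g ≤ 1 := by
  have hsub : (Finset.univ.filter fun i => f i ≠ g i) ⊆ {p} := by
    intro c hc
    simp only [Finset.mem_filter, Finset.mem_univ, true_and] at hc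
    simp only [Finset.mem_singleton]
    by_contra hcp
    exact hc (h c hcp)
  have := Finset.card_le_card hsub
  simpa [hammingDist] using this

lemma quasi_cancel {ι S : Type*} [DecidableEq ι] {f : (ι → S) → S}
    (hf : IsMultiQuasigroup f) {i : ι} {x y : ι → S}
    (hagree : ∀ j, j ≠ i → x j = y j) (hfeq : f x = f y) : x = y := by
  have hx : Function.update x i (x i) = x := Function.update_eq_self _ _
  have hy : Function.update x i (y i) = y := by
    funext j
    by_cases hj : j = i
    · subst hj; simp
    · simp [Function.update_of_ne hj, hagree j hj]
  have hinj := (hf i x).1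
  have : x i = y i := by
    apply hinj
    simp only []
    rw [hx, hy]; exact hfeq
  funext j
  by_cases hj : j = i
  · subst hj; exact this
  · exact hagree j hj

lemma perfect_eq {ι α : Type*} [Fintype ι] [DecidableEq ι] [DecidableEq α]
    {C : Set (ι → α)} (hC : IsPerfectCode C) {c c' : ι → α}
    (hc : c ∈ C) (hc' : c' ∈ C) {i1 i2 : ι}
    (hagree : ∀ j, j ≠ i1 → j ≠ i2 → c j = c' j) : c = c' := by
  by_contra hne
  obtain ⟨i0, hi0⟩ := Function.ne_iff.mp hne
  have hi0mem : i0 = i1 ∨ i0 = i2 := by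
    by_contra hcon
    push_neg at hcon
    exact hi0 (hagree i0 hcon.1 hcon.2)
  set w := Function.update c i0 (c' i0) with hw
  have h1 : hammingDist w c ≤ 1 :=
    dist_le_one_of_agree i0 (fun j hj => Function.update_of_ne hj _ _)
  have h2 : hammingDist w c' ≤ 1 := by
    rcases hi0mem with rfl | rfl
    · refine dist_le_one_of_agree i2 (fun j hj => ?_)
      by_cases hji : j = i0
      · subst hji; simp [hw]
      · rw [hw, Function.update_of_ne hji]; exact hagree j hji hj
    · refine dist_le_one_of_agree i1 (fun j hj => ?_)
      by_cases hji : j = i0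
      · subst hji; simp [hw]
      · rw [hw, Function.update_of_ne hji]; exact hagree j hj hji
  obtain ⟨u, _, huniq⟩ := hC w
  exact hne ((huniq c ⟨hc, h1⟩).trans (huniq c' ⟨hc', h2⟩).symm)

variable {q k t : ℕ} {F : Type*}

abbrev Idx (q k t : ℕ) := (Fin t × Fin k × Fin (q - 1)) ⊕ (Fin t ⊕ Fin k)

def Xb (w : Idx q k t → F) (i : Fin t) (j : Fin k) : Fin (q - 1) → F :=
  fun a => w (Sum.inl (i, j, a))

def zvec (w : Idx q k t → F) : Fin k → F := fun j => w (Sum.inr (Sum.inr j))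

def Svec (v : (Fin (q - 1) → F) → F) (w : Idx q k t → F) (i : Fin t) : Fin (k + 1) → F :=
  Fin.snoc (fun j => v (Xb w i j)) (w (Sum.inr (Sum.inl i)))

def hvec (h : (Fin (q - 1) → F) → F) (w : Idx q k t → F) (i : Fin t) : Fin k → F :=
  fun j => h (Xb w i j)

section Subs

variable [DecidableEq F]
variable {v h : (Fin (q - 1) → F) → F} (hv : IsMultiQuasigroup v) (hh : IsMultiQuasigroup h)
variable {V : Fin t → ((Fin (k + 1) → F) → F)} (hV : ∀ i, IsMultiQuasigroup (V i))
variable {x y : Idx q k t → F}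

/-- S1: single difference in row i, inside block j0: the block is in fact equal. -/
lemma rowA (hv : IsMultiQuasigroup v) (hV : ∀ i, IsMultiQuasigroup (V i)) (i : Fin t) (j0 : Fin k) (a0 : Fin (q - 1))
    (hA : V i (Svec v x i) = V i (Svec v y i))
    (h1 : ∀ j a, j ≠ j0 → x (Sum.inl (i, j, a)) = y (Sum.inl (i, j, a)))
    (h2 : ∀ a, a ≠ a0 → x (Sum.inl (i, j0, a)) = y (Sum.inl (i, j0, a)))
    (h3 : x (Sum.inr (Sum.inl i)) = y (Sum.inr (Sum.inl i))) :
    ∀ a, x (Sum.inl (i, j0, a)) = y (Sum.inl (i, j0, a)) := by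
  have hagree : ∀ m, m ≠ j0.castSucc → Svec v x i m = Svec v y i m := by
    intro m hm
    refine Fin.lastCases ?_ (fun j hj => ?_) m hm
    · intro _; simp only [Svec, Fin.snoc_last]; exact h3
    · have hjj : j ≠ j0 := fun hc => hj (by rw [hc])
      simp only [Svec, Fin.snoc_castSucc]
      exact congrArg v (funext fun a => h1 j a hjj)
  have hSeq : Svec v x i = Svec v y i := quasi_cancel (hV i) hagree hA
  have hveq : v (Xb x i j0) = v (Xb y i j0) := by
    have := congrFun hSeq j0.castSucc
    simpa only [Svec, Fin.snoc_castSucc] using this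
  have := quasi_cancel hv (i := a0) (x := Xb x i j0) (y := Xb y i j0)
    (fun a ha => h2 a ha) hveq
  exact fun a => congrFun this a

/-- S2: all blocks of row i equal ⇒ the y-coordinate is equal. -/
lemma rowY (hV : ∀ i, IsMultiQuasigroup (V i)) (i : Fin t)
    (hA : V i (Svec v x i) = V i (Svec v y i))
    (h1 : ∀ j a, x (Sum.inl (i, j, a)) = y (Sum.inl (i, j, a))) :
    x (Sum.inr (Sum.inl i)) = y (Sum.inr (Sum.inl i)) := by
  have hagree : ∀ m, m ≠ Fin.last k → Svec v x i m = Svec v y i m := by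
    intro m hm
    refine Fin.lastCases (fun hc => absurd rfl hc) (fun j _ => ?_) m hm
    simp only [Svec, Fin.snoc_castSucc]
    exact congrArg v (funext fun a => h1 j a)
  have hSeq : Svec v x i = Svec v y i := quasi_cancel (hV i) hagree hA
  have := congrFun hSeq (Fin.last k)
  simpa only [Svec, Fin.snoc_last] using this

end Subs

section SubsB

variable [DecidableEq F]
variable {P : Fin (t + 1) → Fin (q * k - k + 1) → Set (Fin k → F)}
variable {γ : Fin (t + 1) → (Fin k → F) → Fin (q * k - k + 1)}
variable {h : (Fin (q - 1) → F) → F}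
variable {Q : (Fin t → Fin (q * k - k + 1)) → Fin (q * k - k + 1)}
variable {x y : Idx q k t → F}

/-- S4: row i's h-vector is equal, given everything else equal and ≤2 diffs in it. -/
lemma hvRow (hPperf : ∀ i j, IsPerfectCode (P i j))
    (hγ : ∀ (i : Fin (t + 1)) (w : Fin k → F) (j : Fin (q * k - k + 1)),
      γ i w = j ↔ w ∈ P i j)
    (hQ : IsMultiQuasigroup Q)
    (hBx : Q (fun i => γ i.castSucc (hvec h x i)) = γ (Fin.last t) (zvec x))
    (hBy : Q (fun i => γ i.castSucc (hvec h y i)) = γ (Fin.last t) (zvec y))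
    (i : Fin t) (j1 j2 : Fin k)
    (h1 : ∀ i', i' ≠ i → hvec h x i' = hvec h y i')
    (h2 : zvec x = zvec y)
    (h3 : ∀ j, j ≠ j1 → j ≠ j2 → hvec h x i j = hvec h y i j) :
    hvec h x i = hvec h y i := by
  have hQeq : Q (fun i' => γ i'.castSucc (hvec h x i')) =
      Q (fun i' => γ i'.castSucc (hvec h y i')) := by
    rw [hBx, hBy, h2]
  have hγeq : γ i.castSucc (hvec h x i) = γ i.castSucc (hvec h y i) := by
    have := quasi_cancel hQ (i := i)
      (x := fun i' => γ i'.castSucc (hvec h x i'))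
      (y := fun i' => γ i'.castSucc (hvec h y i'))
      (fun i' hi' => by show γ i'.castSucc (hvec h x i') = γ i'.castSucc (hvec h y i'); rw [h1 i' hi']) hQeq
    exact congrFun this i
  exact perfect_eq (hPperf i.castSucc (γ i.castSucc (hvec h x i)))
    ((hγ _ _ _).1 rfl) ((hγ _ _ _).1 hγeq.symm) h3

/-- S5: all h-vectors equal ⇒ z vectors equal (given ≤2 diffs there). -/
lemma zEq (hPperf : ∀ i j, IsPerfectCode (P i j))
    (hγ : ∀ (i : Fin (t + 1)) (w : Fin k → F) (j : Fin (q * k - k + 1)),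
      γ i w = j ↔ w ∈ P i j)
    (hBx : Q (fun i => γ i.castSucc (hvec h x i)) = γ (Fin.last t) (zvec x))
    (hBy : Q (fun i => γ i.castSucc (hvec h y i)) = γ (Fin.last t) (zvec y))
    (j1 j2 : Fin k)
    (h1 : ∀ i, hvec h x i = hvec h y i)
    (h3 : ∀ j, j ≠ j1 → j ≠ j2 → zvec x j = zvec y j) :
    zvec x = zvec y := by
  have hγeq : γ (Fin.last t) (zvec x) = γ (Fin.last t) (zvec y) := by
    rw [← hBx, ← hBy]
    congr 1
    funext i'
    rw [h1 i']
  exact perfect_eq (hPperf (Fin.last t) (γ (Fin.last t) (zvec x)))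
    ((hγ _ _ _).1 rfl) ((hγ _ _ _).1 hγeq.symm) h3

end SubsB

/-- S6: block equal via the (v,h)-perfect code. -/
lemma blockEq [DecidableEq F] {v h : (Fin (q - 1) → F) → F}
    (hvh : IsPerfectCode {w : Fin (q - 1) ⊕ Fin 2 → F |
      w (Sum.inr 0) = v (fun a => w (Sum.inl a)) ∧
      w (Sum.inr 1) = h (fun a => w (Sum.inl a))})
    {X Y : Fin (q - 1) → F}
    (hveq : v X = v Y) (hheq : h X = h Y)
    {a1 a2 : Fin (q - 1)}
    (h3 : ∀ a, a ≠ a1 → a ≠ a2 → X a = Y a) : X = Y := by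
  set W : (Fin (q - 1) → F) → (Fin (q - 1) ⊕ Fin 2 → F) :=
    fun Z => Sum.elim Z ![v Z, h Z] with hW
  have hmem : ∀ Z, W Z ∈ {w : Fin (q - 1) ⊕ Fin 2 → F |
      w (Sum.inr 0) = v (fun a => w (Sum.inl a)) ∧
      w (Sum.inr 1) = h (fun a => w (Sum.inl a))} := by
    intro Z
    constructor <;> simp [hW]
  have hagree : ∀ c, c ≠ Sum.inl a1 → c ≠ Sum.inl a2 → W X c = W Y c := by
    intro c hc1 hc2
    rcases c with a | b
    · have ha1 : a ≠ a1 := fun hc => hc1 (by rw [hc])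
      have ha2 : a ≠ a2 := fun hc => hc2 (by rw [hc])
      exact h3 a ha1 ha2
    · fin_cases b
      · simpa [hW] using hveq
      · simpa [hW] using hheq
  have := perfect_eq hvh (hmem X) (hmem Y) hagree
  funext a
  exact congrFun this (Sum.inl a)

lemma ne_inlA {i i' : Fin t} {j j' : Fin k} {a a' : Fin (q - 1)}
    (hne : i ≠ i' ∨ j ≠ j' ∨ a ≠ a') :
    (Sum.inl (i, j, a) : Idx q k t) ≠ Sum.inl (i', j', a') := by
  intro hcon
  rw [Sum.inl.injEq, Prod.mk.injEq, Prod.mk.injEq] at hcon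
  tauto

lemma key [DecidableEq F]
    (P : Fin (t + 1) → Fin (q * k - k + 1) → Set (Fin k → F))
    (hPperf : ∀ i j, IsPerfectCode (P i j))
    (γ : Fin (t + 1) → (Fin k → F) → Fin (q * k - k + 1))
    (hγ : ∀ (i : Fin (t + 1)) (w : Fin k → F) (j : Fin (q * k - k + 1)),
      γ i w = j ↔ w ∈ P i j)
    (v h : (Fin (q - 1) → F) → F)
    (hv : IsMultiQuasigroup v) (hh : IsMultiQuasigroup h)
    (hvh : IsPerfectCode {w : Fin (q - 1) ⊕ Fin 2 → F |
      w (Sum.inr 0) = v (fun a => w (Sum.inl a)) ∧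
      w (Sum.inr 1) = h (fun a => w (Sum.inl a))})
    (V : Fin t → ((Fin (k + 1) → F) → F)) (hV : ∀ i, IsMultiQuasigroup (V i))
    (Q : (Fin t → Fin (q * k - k + 1)) → Fin (q * k - k + 1))
    (hQ : IsMultiQuasigroup Q)
    (x y : Idx q k t → F)
    (hA : ∀ i, V i (Svec v x i) = V i (Svec v y i))
    (hBx : Q (fun i => γ i.castSucc (hvec h x i)) = γ (Fin.last t) (zvec x))
    (hBy : Q (fun i => γ i.castSucc (hvec h y i)) = γ (Fin.last t) (zvec y))
    (p p' : Idx q k t)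
    (agree : ∀ c, c ≠ p → c ≠ p' → x c = y c) : x = y := by
  have conclude : (∀ i j a, x (Sum.inl (i, j, a)) = y (Sum.inl (i, j, a))) →
      (∀ i, x (Sum.inr (Sum.inl i)) = y (Sum.inr (Sum.inl i))) →
      (∀ j, x (Sum.inr (Sum.inr j)) = y (Sum.inr (Sum.inr j))) → x = y := by
    intro hA' hY hZ
    funext c
    rcases c with ⟨i, j, a⟩ | (i | j)
    · exact hA' i j a
    · exact hY i
    · exact hZ j
  have hvrow : ∀ i, (∀ j a, x (Sum.inl (i, j, a)) = y (Sum.inl (i, j, a))) →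
      hvec h x i = hvec h y i :=
    fun i hb => funext fun j => congrArg h (funext (hb j))
  rcases p with ⟨i1, j1, a1⟩ | (i1 | l1) <;> rcases p' with ⟨i2, j2, a2⟩ | (i2 | l2)
  -- Case AA
  · by_cases hi12 : i1 = i2
    · subst hi12
      have hz : zvec x = zvec y := funext fun j => agree _ (by simp) (by simp)
      have hother : ∀ i', i' ≠ i1 → hvec h x i' = hvec h y i' := fun i' hi' =>
        hvrow i' fun j a => agree _ (ne_inlA (Or.inl hi')) (ne_inlA (Or.inl hi'))
      have h3 : ∀ j, j ≠ j1 → j ≠ j2 → hvec h x i1 j = hvec h y i1 j := fun j hj1 hj2 =>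
        congrArg h (funext fun a =>
          agree _ (ne_inlA (Or.inr (Or.inl hj1))) (ne_inlA (Or.inr (Or.inl hj2))))
      have hhv : hvec h x i1 = hvec h y i1 :=
        hvRow hPperf hγ hQ hBx hBy i1 j1 j2 hother hz h3
      by_cases hj12 : j1 = j2
      · subst hj12
        -- two differences in a single block (i1,j1)
        have hheq : h (Xb x i1 j1) = h (Xb y i1 j1) := congrFun hhv j1
        have hagreeS : ∀ m, m ≠ j1.castSucc → Svec v x i1 m = Svec v y i1 m := by
          intro m hm
          refine Fin.lastCases ?_ (fun j hj => ?_) m hm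
          · intro _
            simp only [Svec, Fin.snoc_last]
            exact agree _ (by simp) (by simp)
          · have hjj : j ≠ j1 := fun hc => hj (by rw [hc])
            simp only [Svec, Fin.snoc_castSucc]
            exact congrArg v (funext fun a =>
              agree _ (ne_inlA (Or.inr (Or.inl hjj))) (ne_inlA (Or.inr (Or.inl hjj))))
        have hSeq : Svec v x i1 = Svec v y i1 := quasi_cancel (hV i1) hagreeS (hA i1)
        have hveq : v (Xb x i1 j1) = v (Xb y i1 j1) := by
          simpa only [Svec, Fin.snoc_castSucc] using congrFun hSeq j1.castSucc
        have hbl : Xb x i1 j1 = Xb y i1 j1 :=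
          blockEq hvh hveq hheq (a1 := a1) (a2 := a2) fun a ha1 ha2 =>
            agree _ (ne_inlA (Or.inr (Or.inr ha1))) (ne_inlA (Or.inr (Or.inr ha2)))
        refine conclude (fun i j a => ?_) (fun i => agree _ (by simp) (by simp))
          (fun j => agree _ (by simp) (by simp))
        by_cases hi : i = i1
        · subst hi
          by_cases hj : j = j1
          · subst hj; exact congrFun hbl a
          · exact agree _ (ne_inlA (Or.inr (Or.inl hj))) (ne_inlA (Or.inr (Or.inl hj)))
        · exact agree _ (ne_inlA (Or.inl hi)) (ne_inlA (Or.inl hi))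
      · -- two differences in distinct blocks of row i1
        have hbl1 : Xb x i1 j1 = Xb y i1 j1 :=
          quasi_cancel hh (i := a1)
            (fun a ha => agree _ (ne_inlA (Or.inr (Or.inr ha)))
              (ne_inlA (Or.inr (Or.inl hj12)))) (congrFun hhv j1)
        have hbl2 : Xb x i1 j2 = Xb y i1 j2 :=
          quasi_cancel hh (i := a2)
            (fun a ha => agree _ (ne_inlA (Or.inr (Or.inl (Ne.symm hj12))))
              (ne_inlA (Or.inr (Or.inr ha)))) (congrFun hhv j2)
        refine conclude (fun i j a => ?_) (fun i => agree _ (by simp) (by simp))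
          (fun j => agree _ (by simp) (by simp))
        by_cases hi : i = i1
        · subst hi
          by_cases hj : j = j1
          · subst hj; exact congrFun hbl1 a
          · by_cases hj' : j = j2
            · subst hj'; exact congrFun hbl2 a
            · exact agree _ (ne_inlA (Or.inr (Or.inl hj))) (ne_inlA (Or.inr (Or.inl hj')))
        · exact agree _ (ne_inlA (Or.inl hi)) (ne_inlA (Or.inl hi))
    · -- differences in distinct rows
      have hbl1 : ∀ a, x (Sum.inl (i1, j1, a)) = y (Sum.inl (i1, j1, a)) :=
        rowA hv hV i1 j1 a1 (hA i1)
          (fun j a hj => agree _ (ne_inlA (Or.inr (Or.inl hj))) (ne_inlA (Or.inl hi12)))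
          (fun a ha => agree _ (ne_inlA (Or.inr (Or.inr ha))) (ne_inlA (Or.inl hi12)))
          (agree _ (by simp) (by simp))
      have hbl2 : ∀ a, x (Sum.inl (i2, j2, a)) = y (Sum.inl (i2, j2, a)) :=
        rowA hv hV i2 j2 a2 (hA i2)
          (fun j a hj => agree _ (ne_inlA (Or.inl (Ne.symm hi12))) (ne_inlA (Or.inr (Or.inl hj))))
          (fun a ha => agree _ (ne_inlA (Or.inl (Ne.symm hi12))) (ne_inlA (Or.inr (Or.inr ha))))
          (agree _ (by simp) (by simp))
      refine conclude (fun i j a => ?_) (fun i => agree _ (by simp) (by simp))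
        (fun j => agree _ (by simp) (by simp))
      by_cases hi : i = i1
      · subst hi
        by_cases hj : j = j1
        · subst hj; exact congrFun (funext hbl1 : _) a
        · exact agree _ (ne_inlA (Or.inr (Or.inl hj))) (ne_inlA (Or.inl hi12))
      · by_cases hi' : i = i2
        · subst hi'
          by_cases hj : j = j2
          · subst hj; exact hbl2 a
          · exact agree _ (ne_inlA (Or.inl hi)) (ne_inlA (Or.inr (Or.inl hj)))
        · exact agree _ (ne_inlA (Or.inl hi)) (ne_inlA (Or.inl hi'))
  -- Case AY
  · by_cases hi12 : i1 = i2
    · subst hi12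
      have hz : zvec x = zvec y := funext fun j => agree _ (by simp) (by simp)
      have hother : ∀ i', i' ≠ i1 → hvec h x i' = hvec h y i' := fun i' hi' =>
        hvrow i' fun j a => agree _ (ne_inlA (Or.inl hi')) (by simp)
      have h3 : ∀ j, j ≠ j1 → j ≠ j1 → hvec h x i1 j = hvec h y i1 j := fun j hj _ =>
        congrArg h (funext fun a => agree _ (ne_inlA (Or.inr (Or.inl hj))) (by simp))
      have hhv : hvec h x i1 = hvec h y i1 :=
        hvRow hPperf hγ hQ hBx hBy i1 j1 j1 hother hz h3
      have hbl1 : Xb x i1 j1 = Xb y i1 j1 :=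
        quasi_cancel hh (i := a1)
          (fun a ha => agree _ (ne_inlA (Or.inr (Or.inr ha))) (by simp))
          (congrFun hhv j1)
      have hblocks : ∀ j a, x (Sum.inl (i1, j, a)) = y (Sum.inl (i1, j, a)) := by
        intro j a
        by_cases hj : j = j1
        · subst hj; exact congrFun hbl1 a
        · exact agree _ (ne_inlA (Or.inr (Or.inl hj))) (by simp)
      have hy1 : x (Sum.inr (Sum.inl i1)) = y (Sum.inr (Sum.inl i1)) :=
        rowY hV i1 (hA i1) hblocks
      refine conclude (fun i j a => ?_) (fun i => ?_) (fun j => agree _ (by simp) (by simp))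
      · by_cases hi : i = i1
        · subst hi; exact hblocks j a
        · exact agree _ (ne_inlA (Or.inl hi)) (by simp)
      · by_cases hi : i = i1
        · subst hi; exact hy1
        · exact agree _ (by simp) (by simp [hi])
    · have hbl1 : ∀ a, x (Sum.inl (i1, j1, a)) = y (Sum.inl (i1, j1, a)) :=
        rowA hv hV i1 j1 a1 (hA i1)
          (fun j a hj => agree _ (ne_inlA (Or.inr (Or.inl hj))) (by simp))
          (fun a ha => agree _ (ne_inlA (Or.inr (Or.inr ha))) (by simp))
          (agree _ (by simp) (by simp [hi12]))
      have hblocks : ∀ i j a, x (Sum.inl (i, j, a)) = y (Sum.inl (i, j, a)) := by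
        intro i j a
        by_cases hi : i = i1
        · subst hi
          by_cases hj : j = j1
          · subst hj; exact hbl1 a
          · exact agree _ (ne_inlA (Or.inr (Or.inl hj))) (by simp)
        · exact agree _ (ne_inlA (Or.inl hi)) (by simp)
      have hy2 : x (Sum.inr (Sum.inl i2)) = y (Sum.inr (Sum.inl i2)) :=
        rowY hV i2 (hA i2) (hblocks i2)
      refine conclude hblocks (fun i => ?_) (fun j => agree _ (by simp) (by simp))
      by_cases hi : i = i2
      · subst hi; exact hy2
      · exact agree _ (by simp) (by simp [hi])
  -- Case AZ
  · have hbl1 : ∀ a, x (Sum.inl (i1, j1, a)) = y (Sum.inl (i1, j1, a)) :=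
      rowA hv hV i1 j1 a1 (hA i1)
        (fun j a hj => agree _ (ne_inlA (Or.inr (Or.inl hj))) (by simp))
        (fun a ha => agree _ (ne_inlA (Or.inr (Or.inr ha))) (by simp))
        (agree _ (by simp) (by simp))
    have hblocks : ∀ i j a, x (Sum.inl (i, j, a)) = y (Sum.inl (i, j, a)) := by
      intro i j a
      by_cases hi : i = i1
      · subst hi
        by_cases hj : j = j1
        · subst hj; exact hbl1 a
        · exact agree _ (ne_inlA (Or.inr (Or.inl hj))) (by simp)
      · exact agree _ (ne_inlA (Or.inl hi)) (by simp)
    have hz : zvec x = zvec y :=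
      zEq hPperf hγ hBx hBy l2 l2 (fun i => hvrow i (hblocks i))
        (fun j hj _ => agree _ (by simp) (by simp [hj]))
    exact conclude hblocks (fun i => agree _ (by simp) (by simp)) (fun j => congrFun hz j)
  -- Case YA
  · by_cases hi12 : i2 = i1
    · subst hi12
      have hz : zvec x = zvec y := funext fun j => agree _ (by simp) (by simp)
      have hother : ∀ i', i' ≠ i2 → hvec h x i' = hvec h y i' := fun i' hi' =>
        hvrow i' fun j a => agree _ (by simp) (ne_inlA (Or.inl hi'))
      have h3 : ∀ j, j ≠ j2 → j ≠ j2 → hvec h x i2 j = hvec h y i2 j := fun j hj _ =>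
        congrArg h (funext fun a => agree _ (by simp) (ne_inlA (Or.inr (Or.inl hj))))
      have hhv : hvec h x i2 = hvec h y i2 :=
        hvRow hPperf hγ hQ hBx hBy i2 j2 j2 hother hz h3
      have hbl2 : Xb x i2 j2 = Xb y i2 j2 :=
        quasi_cancel hh (i := a2)
          (fun a ha => agree _ (by simp) (ne_inlA (Or.inr (Or.inr ha))))
          (congrFun hhv j2)
      have hblocks : ∀ j a, x (Sum.inl (i2, j, a)) = y (Sum.inl (i2, j, a)) := by
        intro j a
        by_cases hj : j = j2
        · subst hj; exact congrFun hbl2 a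
        · exact agree _ (by simp) (ne_inlA (Or.inr (Or.inl hj)))
      have hy1 : x (Sum.inr (Sum.inl i2)) = y (Sum.inr (Sum.inl i2)) :=
        rowY hV i2 (hA i2) hblocks
      refine conclude (fun i j a => ?_) (fun i => ?_) (fun j => agree _ (by simp) (by simp))
      · by_cases hi : i = i2
        · subst hi; exact hblocks j a
        · exact agree _ (by simp) (ne_inlA (Or.inl hi))
      · by_cases hi : i = i2
        · subst hi; exact hy1
        · exact agree _ (by simp [hi]) (by simp)
    · have hbl2 : ∀ a, x (Sum.inl (i2, j2, a)) = y (Sum.inl (i2, j2, a)) :=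
        rowA hv hV i2 j2 a2 (hA i2)
          (fun j a hj => agree _ (by simp) (ne_inlA (Or.inr (Or.inl hj))))
          (fun a ha => agree _ (by simp) (ne_inlA (Or.inr (Or.inr ha))))
          (agree _ (by simp [hi12]) (by simp))
      have hblocks : ∀ i j a, x (Sum.inl (i, j, a)) = y (Sum.inl (i, j, a)) := by
        intro i j a
        by_cases hi : i = i2
        · subst hi
          by_cases hj : j = j2
          · subst hj; exact hbl2 a
          · exact agree _ (by simp) (ne_inlA (Or.inr (Or.inl hj)))
        · exact agree _ (by simp) (ne_inlA (Or.inl hi))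
      have hy1 : x (Sum.inr (Sum.inl i1)) = y (Sum.inr (Sum.inl i1)) :=
        rowY hV i1 (hA i1) (hblocks i1)
      refine conclude hblocks (fun i => ?_) (fun j => agree _ (by simp) (by simp))
      by_cases hi : i = i1
      · subst hi; exact hy1
      · exact agree _ (by simp [hi]) (by simp)
  -- Case YY
  · have hblocks : ∀ i j a, x (Sum.inl (i, j, a)) = y (Sum.inl (i, j, a)) :=
      fun i j a => agree _ (by simp) (by simp)
    refine conclude hblocks (fun i => ?_) (fun j => agree _ (by simp) (by simp))
    by_cases hi : i = i1
    · subst hi; exact rowY hV i (hA i) (hblocks i)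
    · by_cases hi' : i = i2
      · subst hi'; exact rowY hV i (hA i) (hblocks i)
      · exact agree _ (by simp [hi]) (by simp [hi'])
  -- Case YZ
  · have hblocks : ∀ i j a, x (Sum.inl (i, j, a)) = y (Sum.inl (i, j, a)) :=
      fun i j a => agree _ (by simp) (by simp)
    have hz : zvec x = zvec y :=
      zEq hPperf hγ hBx hBy l2 l2 (fun i => hvrow i (hblocks i))
        (fun j hj _ => agree _ (by simp) (by simp [hj]))
    refine conclude hblocks (fun i => ?_) (fun j => congrFun hz j)
    by_cases hi : i = i1
    · subst hi; exact rowY hV i (hA i) (hblocks i)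
    · exact agree _ (by simp [hi]) (by simp)
  -- Case ZA
  · have hbl2 : ∀ a, x (Sum.inl (i2, j2, a)) = y (Sum.inl (i2, j2, a)) :=
      rowA hv hV i2 j2 a2 (hA i2)
        (fun j a hj => agree _ (by simp) (ne_inlA (Or.inr (Or.inl hj))))
        (fun a ha => agree _ (by simp) (ne_inlA (Or.inr (Or.inr ha))))
        (agree _ (by simp) (by simp))
    have hblocks : ∀ i j a, x (Sum.inl (i, j, a)) = y (Sum.inl (i, j, a)) := by
      intro i j a
      by_cases hi : i = i2
      · subst hi
        by_cases hj : j = j2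
        · subst hj; exact hbl2 a
        · exact agree _ (by simp) (ne_inlA (Or.inr (Or.inl hj)))
      · exact agree _ (by simp) (ne_inlA (Or.inl hi))
    have hz : zvec x = zvec y :=
      zEq hPperf hγ hBx hBy l1 l1 (fun i => hvrow i (hblocks i))
        (fun j hj _ => agree _ (by simp [hj]) (by simp))
    exact conclude hblocks (fun i => agree _ (by simp) (by simp)) (fun j => congrFun hz j)
  -- Case ZY
  · have hblocks : ∀ i j a, x (Sum.inl (i, j, a)) = y (Sum.inl (i, j, a)) :=
      fun i j a => agree _ (by simp) (by simp)
    have hz : zvec x = zvec y :=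
      zEq hPperf hγ hBx hBy l1 l1 (fun i => hvrow i (hblocks i))
        (fun j hj _ => agree _ (by simp [hj]) (by simp))
    refine conclude hblocks (fun i => ?_) (fun j => congrFun hz j)
    by_cases hi : i = i2
    · subst hi; exact rowY hV i (hA i) (hblocks i)
    · exact agree _ (by simp) (by simp [hi])
  -- Case ZZ
  · have hblocks : ∀ i j a, x (Sum.inl (i, j, a)) = y (Sum.inl (i, j, a)) :=
      fun i j a => agree _ (by simp) (by simp)
    have hz : zvec x = zvec y :=
      zEq hPperf hγ hBx hBy l1 l2 (fun i => hvrow i (hblocks i))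
        (fun j hj1 hj2 => agree _ (by simp [hj1]) (by simp [hj2]))
    exact conclude hblocks (fun i => agree _ (by simp) (by simp)) (fun j => congrFun hz j)


end Stmt4Aux

/-- The generalized Phelps `μ`-component has minimum distance at least 3.  Words of
length `(q-1)kt + t + k` are identified with functions on
`(Fin t × Fin k × Fin (q-1)) ⊕ (Fin t ⊕ Fin k)`: the blocks `x̄ᵢⱼ ∈ F_q^{q-1}`,
the coordinates `yᵢ`, and the coordinates `zⱼ`.  For each `i = 1, …, t+1`, the sets
`P i j`, `j = 0, …, qk-k`, form a partition of `F_q^k` into perfect codes, with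
partition function `γ i`. -/
theorem stmt_4 {q k t : ℕ} (F : Type*) [Field F] [Fintype F] [DecidableEq F]
    (hq : Fintype.card F = q) (hk : 1 ≤ k) (ht : 1 ≤ t)
    (μ : Fin t → F)
    (P : Fin (t + 1) → Fin (q * k - k + 1) → Set (Fin k → F))
    (hPperf : ∀ i j, IsPerfectCode (P i j))
    (hPpart : ∀ (i : Fin (t + 1)) (y : Fin k → F), ∃! j, y ∈ P i j)
    (γ : Fin (t + 1) → (Fin k → F) → Fin (q * k - k + 1))
    (hγ : ∀ (i : Fin (t + 1)) (y : Fin k → F) (j : Fin (q * k - k + 1)),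
      γ i y = j ↔ y ∈ P i j)
    (v h : (Fin (q - 1) → F) → F)
    (hv : IsMultiQuasigroup v) (hh : IsMultiQuasigroup h)
    (hvh : IsPerfectCode {w : Fin (q - 1) ⊕ Fin 2 → F |
      w (Sum.inr 0) = v (fun a => w (Sum.inl a)) ∧
      w (Sum.inr 1) = h (fun a => w (Sum.inl a))})
    (V : Fin t → ((Fin (k + 1) → F) → F)) (hV : ∀ i, IsMultiQuasigroup (V i))
    (Q : (Fin t → Fin (q * k - k + 1)) → Fin (q * k - k + 1))
    (hQ : IsMultiQuasigroup Q)
    (Kmu : Set ((Fin t × Fin k × Fin (q - 1)) ⊕ (Fin t ⊕ Fin k) → F))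
    (hKmu : Kmu = {w |
      (∀ i : Fin t,
        V i (Fin.snoc (fun j => v (fun a => w (Sum.inl (i, j, a))))
          (w (Sum.inr (Sum.inl i)))) = μ i) ∧
      Q (fun i : Fin t =>
          γ i.castSucc (fun j => h (fun a => w (Sum.inl (i, j, a))))) =
        γ (Fin.last t) (fun j => w (Sum.inr (Sum.inr j)))}) :
    ∀ x ∈ Kmu, ∀ y ∈ Kmu, x ≠ y → 3 ≤ hammingDist x y := by
  subst hKmu
  intro x hx y hy hxy
  obtain ⟨hAx, hBx⟩ := hx
  obtain ⟨hAy, hBy⟩ := hy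
  by_contra hlt
  push_neg at hlt
  have hle : hammingDist x y ≤ 2 := by omega
  classical
  set D := Finset.univ.filter fun c => x c ≠ y c with hD
  have hDcard : D.card ≤ 2 := by
    have : hammingDist x y = D.card := rfl
    omega
  have hDne : D.Nonempty := by
    obtain ⟨c, hc⟩ := Function.ne_iff.mp hxy
    exact ⟨c, by simp [hD, hc]⟩
  obtain ⟨p, hp⟩ := hDne
  have herase : (D.erase p).card ≤ 1 := by
    have := Finset.card_erase_of_mem hp
    omega
  have hmain : ∀ p' : (Fin t × Fin k × Fin (q - 1)) ⊕ (Fin t ⊕ Fin k),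
      (∀ c, c ≠ p → c ≠ p' → x c = y c) → x = y := by
    intro p' agree
    refine Stmt4Aux.key P hPperf γ hγ v h hv hh hvh V hV Q hQ x y
      (fun i => ?_) ?_ ?_ p p' agree
    · exact (hAx i).trans (hAy i).symm
    · exact hBx
    · exact hBy
  rcases (D.erase p).eq_empty_or_nonempty with he | ⟨p', hp'⟩
  · refine hxy (hmain p fun c hc _ => ?_)
    by_contra hne
    have hcD : c ∈ D := by simp [hD, hne]
    have : c ∈ D.erase p := Finset.mem_erase.mpr ⟨hc, hcD⟩
    simp [he] at this
  · refine hxy (hmain p' fun c hc hc' => ?_)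
    by_contra hne
    have hcD : c ∈ D := by simp [hD, hne]
    have hce : c ∈ D.erase p := Finset.mem_erase.mpr ⟨hc, hcD⟩
    exact hc' (Finset.card_le_one.mp herase c hce p' hp')
end

section
/- Let q be a prime power and k, t positive integers, and set n = (q−1)kt + k + t. Suppose words of F_q^n are (x̄_{11} | … | x̄_{1k} | y_1 | … | x̄_{t1} | … | x̄_{tk} | y_t | z_1 | … | z_k) with x̄_{ij} ∈ F_q^{q−1}, y_i, z_j ∈ F_q; μ ∈ F_q^t; for each i = 1, …, t+1, C_{i,0}, …, C_{i,qk−k} is a partition of F_q^k into qk − k + 1 perfect codes with partition function γ_i; v and h are (q−1)-ary quasigroups of order q on F_q such that {(ȳ | v(ȳ) | h(ȳ)) : ȳ ∈ F_q^{q−1}} is a perfect code in F_q^{q+1}; V_1, …, V_t are (k+1)-ary quasigroups of order q; Q is a t-ary quasigroup of order qk − k + 1; and K_μ is the set of all such words satisfying (V_1(v(x̄_{11}), …, v(x̄_{1k}), y_1), …, V_t(v(x̄_{t1}), …, v(x̄_{tk}), y_t)) = μ and Q(γ_1(h(x̄_{11}), …, h(x̄_{1k})), …, γ_t(h(x̄_{t1}),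 …, h(x̄_{tk}))) = γ_{t+1}(z_1, …, z_k). Then: (i) the cardinality of K_μ equals q^{(q−1)kt} · q^k/(qk − k + 1); (ii) for each i, the function σ_i defined by σ_i(x̄_{i1}, …, x̄_{ik}, y_i) = V_i(v(x̄_{i1}), …, v(x̄_{ik}), y_i) is an ((q−1)k+1)-ary quasigroup of order q, and every x ∈ K_μ satisfies (σ_1(block_1 of x), …, σ_t(block_t of x)) = μ. -/
/-- bijectivity in the last (snoc) coordinate -/
lemma snoc_bij {n : ℕ} {S : Type*} [Nonempty S] (f : (Fin (n + 1) → S) → S)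
    (hf : IsMultiQuasigroup f) (c : Fin n → S) :
    Function.Bijective (fun b => f (Fin.snoc c b)) := by
  have h := hf (Fin.last n) (Fin.snoc c (Classical.arbitrary S))
  have he : (fun b => f (Function.update (Fin.snoc c (Classical.arbitrary S)) (Fin.last n) b))
      = fun b => f (Fin.snoc c b) := by
    funext b; rw [Fin.update_snoc_last]
  rwa [he] at h

/-- cardinality of a Hamming ball of radius 1 -/
lemma ball_card {ι F : Type*} [Fintype ι] [DecidableEq ι] [Fintype F] [DecidableEq F]
    (c : ι → F) :
    Nat.card {x : ι → F // hammingDist x c ≤ 1}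
      = 1 + Fintype.card ι * (Fintype.card F - 1) := by
  classical
  have hd1 : ∀ (i : ι) (a : F), a ≠ c i → hammingDist (Function.update c i a) c ≤ 1 := by
    intro i a ha
    have hsub : (Finset.univ.filter fun j => Function.update c i a j ≠ c j) ⊆ {i} := by
      intro j hj
      simp only [Finset.mem_filter, Finset.mem_univ, true_and] at hj
      simp only [Finset.mem_singleton]
      by_contra hji
      exact hj (by rw [Function.update_of_ne hji])
    calc hammingDist (Function.update c i a) c
        ≤ ({i} : Finset ι).card := Finset.card_le_card hsub
      _ = 1 := rfl
  set f : Unit ⊕ (Σ i : ι, {a : F // a ≠ c i}) → {x : ι → F // hammingDist x c ≤ 1} :=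
    fun s => match s with
      | Sum.inl _ => ⟨c, by simp [hammingDist_self]⟩
      | Sum.inr ⟨i, a, ha⟩ => ⟨Function.update c i a, hd1 i a ha⟩ with hf
  have hbij : Function.Bijective f := by
    constructor
    · rintro (⟨⟩ | ⟨i, a, ha⟩) (⟨⟩ | ⟨i', a', ha'⟩) hfe <;>
        simp only [hf, Subtype.mk.injEq] at hfe
      · rfl
      · exact absurd (congrFun hfe i').symm (by simpa using ha')
      · exact absurd (congrFun hfe i) (by simpa using ha)
      · rcases eq_or_ne i i' with rfl | hii
        · have := congrFun hfe i; simp at this; subst this; rfl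
        · have := congrFun hfe i
          rw [Function.update_self, Function.update_of_ne hii] at this
          exact absurd this ha
    · rintro ⟨x, hx⟩
      rcases eq_or_ne x c with rfl | hxc
      · exact ⟨Sum.inl (), rfl⟩
      · have : ∃ i, x i ≠ c i := by
          by_contra hcon
          push_neg at hcon
          exact hxc (funext hcon)
        obtain ⟨i, hi⟩ := this
        refine ⟨Sum.inr ⟨i, x i, hi⟩, ?_⟩
        simp only [hf, Subtype.mk.injEq]
        funext j
        rcases eq_or_ne j i with rfl | hji
        · rw [Function.update_self]
        · rw [Function.update_of_ne hji]
          by_contra hcc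
          have hpair : ({j, i} : Finset ι) ⊆
              Finset.univ.filter fun l => x l ≠ c l := by
            intro l hl
            simp only [Finset.mem_insert, Finset.mem_singleton] at hl
            rcases hl with rfl | rfl <;> simp [Ne.symm hcc, hi]
          have h2 : 2 ≤ hammingDist x c := by
            calc 2 = ({j, i} : Finset ι).card := by rw [Finset.card_pair hji]
              _ ≤ _ := Finset.card_le_card hpair
          omega
  rw [← Nat.card_eq_of_bijective f hbij]
  simp only [Nat.card_eq_fintype_card, Fintype.card_sum, Fintype.card_sigma,
    Fintype.card_unit]
  congr 1
  have hce : ∀ i : ι, Fintype.card {a : F // a ≠ c i} = Fintype.card F - 1 := by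
    intro i
    simp [Fintype.card_subtype_compl]
  rw [Finset.sum_congr rfl fun i _ => hce i, Finset.sum_const, smul_eq_mul,
    Finset.card_univ]

lemma perfect_card {ι F : Type*} [Fintype ι] [DecidableEq ι] [Fintype F] [DecidableEq F]
    {C : Set (ι → F)} (hC : IsPerfectCode C) :
    Nat.card C * (1 + Fintype.card ι * (Fintype.card F - 1))
      = Fintype.card F ^ Fintype.card ι := by
  classical
  set B := 1 + Fintype.card ι * (Fintype.card F - 1) with hB
  set g : (Σ c : C, {x : ι → F // hammingDist x (c : ι → F) ≤ 1}) → (ι → F) :=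
    fun p => p.2.1 with hg
  have hbij : Function.Bijective g := by
    constructor
    · rintro ⟨⟨c, hc⟩, x, hx⟩ ⟨⟨c', hc'⟩, x', hx'⟩ hfe
      simp only [hg] at hfe
      subst hfe
      obtain ⟨w, -, hw⟩ := hC x
      have h1 := hw c ⟨hc, hx⟩
      have h2 := hw c' ⟨hc', hx'⟩
      subst h1; subst h2; rfl
    · intro x
      obtain ⟨c, ⟨hc, hx⟩, -⟩ := hC x
      exact ⟨⟨⟨c, hc⟩, x, hx⟩, rfl⟩
  have hcard : Nat.card (Σ c : C, {x : ι → F // hammingDist x (c : ι → F) ≤ 1})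
      = Fintype.card F ^ Fintype.card ι := by
    rw [Nat.card_eq_of_bijective g hbij, Nat.card_eq_fintype_card, Fintype.card_fun]
  rw [← hcard]
  have hfib : ∀ c : C, Nat.card {x : ι → F // hammingDist x (c : ι → F) ≤ 1} = B :=
    fun c => ball_card (c : ι → F)
  have e : (Σ c : C, {x : ι → F // hammingDist x (c : ι → F) ≤ 1}) ≃ C × Fin B := by
    refine (Equiv.sigmaCongrRight fun c => ?_).trans (Equiv.sigmaEquivProd C (Fin B))
    refine (Nat.equivFinOfCardPos ?_).trans (finCongr (hfib c))
    rw [hfib c]; omega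
  rw [Nat.card_congr e, Nat.card_prod, Nat.card_eq_fintype_card (α := Fin B),
    Fintype.card_fin]

/-- Cardinality and generalized parity-check law for the generalized Phelps `μ`-component.  Words of
length `(q-1)kt + t + k` are identified with functions on
`(Fin t × Fin k × Fin (q-1)) ⊕ (Fin t ⊕ Fin k)`: the blocks `x̄ᵢⱼ ∈ F_q^{q-1}`,
the coordinates `yᵢ`, and the coordinates `zⱼ`.  For each `i = 1, …, t+1`, the sets
`P i j`, `j = 0, …, qk-k`, form a partition of `F_q^k` into perfect codes, with
partition function `γ i`. -/
theorem stmt_5 {q k t : ℕ} (F : Type*) [Field F] [Fintype F] [DecidableEq F]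
    (hq : Fintype.card F = q) (hk : 1 ≤ k) (ht : 1 ≤ t)
    (μ : Fin t → F)
    (P : Fin (t + 1) → Fin (q * k - k + 1) → Set (Fin k → F))
    (hPperf : ∀ i j, IsPerfectCode (P i j))
    (hPpart : ∀ (i : Fin (t + 1)) (y : Fin k → F), ∃! j, y ∈ P i j)
    (γ : Fin (t + 1) → (Fin k → F) → Fin (q * k - k + 1))
    (hγ : ∀ (i : Fin (t + 1)) (y : Fin k → F) (j : Fin (q * k - k + 1)),
      γ i y = j ↔ y ∈ P i j)
    (v h : (Fin (q - 1) → F) → F)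
    (hv : IsMultiQuasigroup v) (hh : IsMultiQuasigroup h)
    (hvh : IsPerfectCode {w : Fin (q - 1) ⊕ Fin 2 → F |
      w (Sum.inr 0) = v (fun a => w (Sum.inl a)) ∧
      w (Sum.inr 1) = h (fun a => w (Sum.inl a))})
    (V : Fin t → ((Fin (k + 1) → F) → F)) (hV : ∀ i, IsMultiQuasigroup (V i))
    (Q : (Fin t → Fin (q * k - k + 1)) → Fin (q * k - k + 1))
    (hQ : IsMultiQuasigroup Q)
    (Kmu : Set ((Fin t × Fin k × Fin (q - 1)) ⊕ (Fin t ⊕ Fin k) → F))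
    (hKmu : Kmu = {w |
      (∀ i : Fin t,
        V i (Fin.snoc (fun j => v (fun a => w (Sum.inl (i, j, a))))
          (w (Sum.inr (Sum.inl i)))) = μ i) ∧
      Q (fun i : Fin t =>
          γ i.castSucc (fun j => h (fun a => w (Sum.inl (i, j, a))))) =
        γ (Fin.last t) (fun j => w (Sum.inr (Sum.inr j)))}) :
    -- (i) cardinality of K_μ
    Kmu.ncard = q ^ ((q - 1) * k * t) * (q ^ k / (q * k - k + 1)) ∧
    -- (ii) each σᵢ is a ((q-1)k+1)-ary quasigroup ...
    (∀ i : Fin t, IsMultiQuasigroup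
      (fun u : (Fin k × Fin (q - 1)) ⊕ Unit → F =>
        V i (Fin.snoc (fun j => v (fun a => u (Sum.inl (j, a)))) (u (Sum.inr ()))))) ∧
    -- ... and every x ∈ K_μ satisfies σᵢ(i-th block of x) = μᵢ
    (∀ w ∈ Kmu, ∀ i : Fin t,
      V i (Fin.snoc (fun j => v (fun a => w (Sum.inl (i, j, a))))
        (w (Sum.inr (Sum.inl i)))) = μ i) := by
  classical
  have hq2 : 2 ≤ q := hq ▸ Fintype.one_lt_card
  -- arithmetic: q*k - k + 1 = 1 + k * (q - 1)
  have hBeq : q * k - k + 1 = 1 + k * (Fintype.card F - 1) := by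
    rw [hq, add_comm, mul_comm q k]
    have h' : k * (q - 1) = k * q - k := by rw [Nat.mul_sub, mul_one]
    rw [h']
  -- every perfect code in F^k has cardinality q^k/(q*k-k+1)
  have hm : ∀ C : Set (Fin k → F), IsPerfectCode C →
      Nat.card C = q ^ k / (q * k - k + 1) := by
    intro C hC
    have h1 := perfect_card hC
    rw [Fintype.card_fin, hq] at h1
    have hBpos : 0 < 1 + k * (q - 1) := by omega
    rw [hBeq, hq]
    exact (Nat.div_eq_of_eq_mul_left hBpos h1.symm).symm
  refine ⟨?_, ?_, ?_⟩
  · -- (i) cardinality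
    set J : ((Fin t × Fin k × Fin (q - 1)) → F) → Fin (q * k - k + 1) :=
      fun x => Q (fun i => γ i.castSucc (fun j => h (fun a => x (i, j, a)))) with hJ
    have hybij : ∀ (i : Fin t) (c : Fin k → F),
        Function.Bijective fun b => V i (Fin.snoc c b) :=
      fun i c => snoc_bij (V i) (hV i) c
    set y0 : Fin t → ((Fin t × Fin k × Fin (q - 1)) → F) → F := fun i x =>
      (Equiv.ofBijective _ (hybij i (fun j => v fun a => x (i, j, a)))).symm (μ i) with hy0
    have hy0V : ∀ i x, V i (Fin.snoc (fun j => v fun a => x (i, j, a)) (y0 i x)) = μ i := by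
      intro i x
      exact (Equiv.ofBijective _ (hybij i _)).apply_symm_apply (μ i)
    set g : (Σ x : (Fin t × Fin k × Fin (q - 1)) → F,
        {z : Fin k → F // z ∈ P (Fin.last t) (J x)}) →
        ((Fin t × Fin k × Fin (q - 1)) ⊕ (Fin t ⊕ Fin k)) → F :=
      fun p => Sum.elim p.1 (Sum.elim (fun i => y0 i p.1) (fun j => p.2.1 j)) with hg
    have hgmem : ∀ p, g p ∈ Kmu := by
      rintro ⟨x, z, hz⟩
      rw [hKmu]
      constructor
      · intro i
        simpa [hg] using hy0V i x
      · have h3 := (hγ (Fin.last t) z (J x)).mpr hz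
        simp only [hJ] at h3
        simpa [hg] using h3.symm
    set g' : (Σ x : (Fin t × Fin k × Fin (q - 1)) → F,
        {z : Fin k → F // z ∈ P (Fin.last t) (J x)}) → Kmu :=
      fun p => (⟨g p, hgmem p⟩ : Kmu) with hg'
    have hgbij : Function.Bijective g' := by
      constructor
      · rintro ⟨x, z, hz⟩ ⟨x', z', hz'⟩ hgg
        have hgg' : g ⟨x, z, hz⟩ = g ⟨x', z', hz'⟩ := congrArg Subtype.val hgg
        have hx : x = x' := by funext p; exact congrFun hgg' (Sum.inl p)
        subst hx
        have hzz : z = z' := by funext j; exact congrFun hgg' (Sum.inr (Sum.inr j))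
        subst hzz
        rfl
      · rintro ⟨w, hw⟩
        have hw' := hw
        rw [hKmu] at hw'
        obtain ⟨hw1, hw2⟩ := hw'
        refine ⟨⟨fun p => w (Sum.inl p),
          ⟨fun j => w (Sum.inr (Sum.inr j)), (hγ (Fin.last t) _ _).mp hw2.symm⟩⟩, ?_⟩
        apply Subtype.ext
        funext s
        rcases s with p | (i | j)
        · rfl
        · show y0 i (fun p => w (Sum.inl p)) = w (Sum.inr (Sum.inl i))
          apply (hybij i (fun j => v fun a => w (Sum.inl (i, j, a)))).injective
          show V i (Fin.snoc _ _) = V i (Fin.snoc _ _)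
          rw [hy0V i (fun p => w (Sum.inl p))]
          exact (hw1 i).symm
        · rfl
    have hfib : ∀ x, Nat.card {z : Fin k → F // z ∈ P (Fin.last t) (J x)}
        = q ^ k / (q * k - k + 1) := fun x => hm _ (hPperf _ _)
    have hne : ∀ x, Nat.card {z : Fin k → F // z ∈ P (Fin.last t) (J x)} ≠ 0 := by
      intro x
      obtain ⟨c, ⟨hc, -⟩, -⟩ := hPperf (Fin.last t) (J x) (fun _ => (0 : F))
      have : Nonempty {z : Fin k → F // z ∈ P (Fin.last t) (J x)} := ⟨⟨c, hc⟩⟩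
      exact Nat.card_pos.ne'
    have e : (Σ x : (Fin t × Fin k × Fin (q - 1)) → F,
        {z : Fin k → F // z ∈ P (Fin.last t) (J x)}) ≃
        ((Fin t × Fin k × Fin (q - 1)) → F) × Fin (q ^ k / (q * k - k + 1)) := by
      refine (Equiv.sigmaCongrRight fun x => ?_).trans (Equiv.sigmaEquivProd _ _)
      exact (Nat.equivFinOfCardPos (hne x)).trans (finCongr (hfib x))
    rw [← Nat.card_coe_set_eq, ← Nat.card_eq_of_bijective g' hgbij,
      Nat.card_congr e, Nat.card_prod, Nat.card_eq_fintype_card, Fintype.card_fun, hq,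
      Nat.card_eq_fintype_card, Fintype.card_fin]
    congr 2
    simp only [Fintype.card_prod, Fintype.card_fin]
    ring
  · -- (ii) each σᵢ is a quasigroup
    intro i idx u
    rcases idx with ⟨j, a0⟩ | _
    · set c : Fin k → F := fun j' => v fun a => u (Sum.inl (j', a)) with hc
      set g0 : Fin (q - 1) → F := fun a => u (Sum.inl (j, a)) with hg0
      have key : Function.Bijective fun b =>
          V i (Function.update (Fin.snoc c (u (Sum.inr ()))) j.castSucc
            (v (Function.update g0 a0 b))) :=
        (hV i j.castSucc (Fin.snoc c (u (Sum.inr ())))).comp (hv a0 g0)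
      have h1 : ∀ b : F, (fun j' => v fun a =>
          Function.update u (Sum.inl (j, a0)) b (Sum.inl (j', a)))
          = Function.update c j (v (Function.update g0 a0 b)) := by
        intro b
        funext j'
        rcases eq_or_ne j' j with rfl | hjj
        · rw [Function.update_self]
          congr 1
          funext a
          rcases eq_or_ne a a0 with rfl | haa
          · rw [Function.update_self, Function.update_self]
          · rw [Function.update_of_ne (by simp [haa]), Function.update_of_ne haa]
        · rw [Function.update_of_ne hjj, hc]
          congr 1
          funext a
          rw [Function.update_of_ne (by simp [hjj])]
      have h2 : ∀ b : F, Function.update u (Sum.inl (j, a0)) b (Sum.inr ()) = u (Sum.inr ()) :=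
        fun b => Function.update_of_ne (by simp) _ _
      have he : (fun b => (fun u : (Fin k × Fin (q - 1)) ⊕ Unit → F =>
          V i (Fin.snoc (fun j => v (fun a => u (Sum.inl (j, a)))) (u (Sum.inr ()))))
            (Function.update u (Sum.inl (j, a0)) b))
          = fun b => V i (Function.update (Fin.snoc c (u (Sum.inr ()))) j.castSucc
            (v (Function.update g0 a0 b))) := by
        funext b
        simp only [h1 b, h2 b, Fin.snoc_update]
      rw [show (Sum.inl (j, a0) : (Fin k × Fin (q - 1)) ⊕ Unit) = Sum.inl (j, a0) from rfl]
      exact he ▸ key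
    · have key := snoc_bij (V i) (hV i) (fun j => v fun a => u (Sum.inl (j, a)))
      have he : (fun b => (fun u : (Fin k × Fin (q - 1)) ⊕ Unit → F =>
          V i (Fin.snoc (fun j => v (fun a => u (Sum.inl (j, a)))) (u (Sum.inr ()))))
            (Function.update u (Sum.inr ()) b))
          = fun b => V i (Fin.snoc (fun j => v fun a => u (Sum.inl (j, a))) b) := by
        funext b
        simp [Function.update_apply]
      exact he ▸ key
  · -- (iii)
    intro w hw i
    rw [hKmu] at hw
    exact hw.1 i
end

section
/- Let q be a prime power, m ≥ 2 an integer, n = (q^m − 1)/(q − 1), and t = (n − 1)/q = (q^{m−1} − 1)/(q − 1). Let Q(t, q) denote the number of t-ary quasigroups of order q. Then the number of perfect codes in F_q^n is at least Q(t, q)^{q^t/(t(q−1)+1)}, where q^t/(t(q−1)+1) = q^{t−m+1} is the cardinality of a perfect code of length t over F_q. -/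
/-!
Take a perfect code `D` of length `t` (a Hamming code, of size `q ^ (t - m + 1)`) and attach
a `t`-ary quasigroup `f c` to every `c ∈ D`. Index the coordinates of `F ^ (q t + 1)` by the
pairs `(j, i) : Fin t × F` and one extra coordinate. The words whose block sums
`s j = ∑ i, w (j, i)` form a codeword `c ∈ D`, and whose extra coordinate is `f c` evaluated at
the weighted block sums `∑ i, i * w (j, i)`, form a perfect code: adding `δ` to `w (j, i)` adds
`δ` to `s j` and `i * δ` to the `j`-th weighted sum, so the perfectness of `D` determines the
block `j` and the shift `δ` of the unique nearby codeword, and the quasigroup property of `f c`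
determines `i`. Different families of quasigroups give different codes.
-/

open scoped LinearAlgebra.Projectivization

section HammingBall
variable {ι β : Type*} [Fintype ι] [DecidableEq ι]

theorem hammingNorm_le_one_iff [Nonempty ι] [Zero β] [DecidableEq β] {z : ι → β} :
    hammingNorm z ≤ 1 ↔ ∃ i b, z = Pi.single i b := by
  rw [hammingNorm, Finset.card_le_one_iff_subset_singleton]
  simp only [Finset.subset_singleton_iff', Finset.mem_filter, Finset.mem_univ, true_and]
  constructor
  · rintro ⟨i, hi⟩
    refine ⟨i, z i, funext fun j => ?_⟩
    rcases eq_or_ne j i with rfl | hj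
    · simp
    · simpa [hj] using not_imp_comm.1 (hi j) hj
  · rintro ⟨i, b, rfl⟩
    exact ⟨i, fun j hj => by_contra fun h => hj (by simp [h])⟩

theorem hammingDist_add_single_le_one [AddGroup β] [DecidableEq β] (x : ι → β) (i : ι) (b : β) :
    hammingDist x (x + Pi.single i b) ≤ 1 := by
  have : Nonempty ι := ⟨i⟩
  rw [hammingDist_eq_hammingNorm, neg_add_cancel_left, hammingNorm_le_one_iff]
  exact ⟨i, b, rfl⟩

theorem hammingDist_le_one_iff_exists_eq_add_single [Nonempty ι] [AddGroup β] [DecidableEq β]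
    {x y : ι → β} : hammingDist x y ≤ 1 ↔ ∃ i b, y = x + Pi.single i b := by
  simp only [hammingDist_eq_hammingNorm, hammingNorm_le_one_iff, neg_add_eq_iff_eq_add]

end HammingBall

section PerfectCode
variable {ι κ α : Type*} [Fintype ι] [Fintype κ] [DecidableEq α]

theorem IsPerfectCode.eq_of_hammingDist_le_one {C : Set (ι → α)} (hC : IsPerfectCode C)
    {c c' : ι → α} (hc : c ∈ C) (hc' : c' ∈ C) (h : hammingDist c c' ≤ 1) : c = c' :=
  (hC c).unique (y₁ := c) (y₂ := c') ⟨hc, by simp⟩ ⟨hc', h⟩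

theorem isPerfectCode_iff_existsUnique_add_single [Nonempty ι] [DecidableEq ι] [AddGroup α]
    {C : Set (ι → α)} :
    IsPerfectCode C ↔ ∀ x : ι → α, ∃! c, c ∈ C ∧ ∃ i b, c = x + Pi.single i b := by
  simp only [IsPerfectCode, hammingDist_le_one_iff_exists_eq_add_single]

theorem hammingDist_comp_equiv (e : κ ≃ ι) (x y : ι → α) :
    hammingDist (x ∘ e) (y ∘ e) = hammingDist x y :=
  Finset.card_equiv e (by simp)

theorem IsPerfectCode.image_comp_equiv {C : Set (ι → α)} (hC : IsPerfectCode C) (e : κ ≃ ι) :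
    IsPerfectCode ((· ∘ e) '' C) := by
  have hdist (y : κ → α) (z : ι → α) : hammingDist y (z ∘ e) = hammingDist (y ∘ e.symm) z := by
    rw [← hammingDist_comp_equiv e, Function.comp_assoc, e.symm_comp_self, Function.comp_id]
  intro y
  obtain ⟨c, ⟨hc, hd⟩, hu⟩ := hC (y ∘ e.symm)
  refine ⟨c ∘ e, ⟨⟨c, hc, rfl⟩, hdist y c ▸ hd⟩, ?_⟩
  rintro _ ⟨⟨c', hc', rfl⟩, hd'⟩
  rw [hu c' ⟨hc', hdist y c' ▸ hd'⟩]

theorem card_perfectCode_le_of_equiv [Finite α] (e : κ ≃ ι) :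
    Nat.card {C : Set (ι → α) // IsPerfectCode C} ≤
      Nat.card {C : Set (κ → α) // IsPerfectCode C} :=
  Nat.card_le_card_of_injective (fun C => ⟨(· ∘ e) '' C.1, C.2.image_comp_equiv e⟩) fun _ _ h =>
    Subtype.ext <| Set.image_injective.2 e.surjective.injective_comp_right (congrArg Subtype.val h)

end PerfectCode

section PiSingle
variable {ι β : Type*} [DecidableEq ι]

theorem Pi.single_eq_single_iff_of_ne_zero [Zero β] {i j : ι} {a b : β} (hb : b ≠ 0) :
    (Pi.single i a : ι → β) = Pi.single j b ↔ i = j ∧ a = b := by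
  constructor
  · intro h
    have hij : i = j := by
      by_contra hij
      apply hb
      simpa [Ne.symm hij] using (congrFun h j).symm
    subst hij
    exact ⟨rfl, Pi.single_injective i h⟩
  · rintro ⟨rfl, rfl⟩
    rfl

@[simp]
theorem Pi.single_none_comp_some [Zero β] (b : β) :
    (Pi.single none b : Option ι → β) ∘ some = 0 := by
  funext; simp

@[simp]
theorem Pi.single_some_comp_some [Zero β] (i : ι) (b : β) :
    (Pi.single (some i) b : Option ι → β) ∘ some = Pi.single i b := by
  funext j; simp [Pi.single_apply]

theorem add_single_comp_some [AddZeroClass β] (w : Option ι → β) (k : Option ι) (b : β) :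
    (w + Pi.single k b) ∘ some = w ∘ some + Pi.single k b ∘ some :=
  rfl

end PiSingle

section HammingCode
variable {ι F V : Type*} [Field F] [AddCommGroup V] [Module F V]

theorem isPerfectCode_ker [DecidableEq F] [Fintype ι] [DecidableEq ι] (H : (ι → F) →ₗ[F] V)
    (hH : ∀ s, ∃! z, hammingNorm z ≤ 1 ∧ H z = s) :
    IsPerfectCode (LinearMap.ker H : Set (ι → F)) := by
  intro x
  obtain ⟨z, ⟨hz, hHz⟩, hu⟩ := hH (-H x)
  refine ⟨x + z, ⟨by simp [hHz], by rwa [hammingDist_eq_hammingNorm, neg_add_cancel_left]⟩, ?_⟩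
  rintro c ⟨hc, hd⟩
  rw [hammingDist_eq_hammingNorm] at hd
  rw [← hu (-x + c) ⟨hd, by simp_all⟩, add_neg_cancel_left]

theorem Projectivization.eq_of_smul_rep_eq {p₁ p₂ : ℙ F V} {b₁ b₂ : F} (hb : b₁ ≠ 0)
    (h : b₁ • p₁.rep = b₂ • p₂.rep) : p₁ = p₂ ∧ b₁ = b₂ := by
  have hp : p₁ = p₂ := by
    rw [← mk_rep p₁, ← mk_rep p₂, mk_eq_mk_iff' _ _ _ (rep_nonzero _) (rep_nonzero _)]
    exact ⟨b₁⁻¹ * b₂, by rw [mul_smul, ← h, inv_smul_smul₀ hb]⟩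
  subst hp
  exact ⟨rfl, smul_left_injective F (rep_nonzero p₁) h⟩

variable (F V) [DecidableEq F] [Nontrivial V] [Fintype (ℙ F V)] [DecidableEq (ℙ F V)]

noncomputable def hammingSyndrome : (ℙ F V → F) →ₗ[F] V :=
  Fintype.linearCombination F fun p => p.rep

noncomputable def hammingCode : Submodule F (ℙ F V → F) :=
  LinearMap.ker (hammingSyndrome F V)

theorem hammingSyndrome_injOn : Set.InjOn (hammingSyndrome F V) {z | hammingNorm z ≤ 1} := by
  intro z₁ h₁ z₂ h₂ h
  obtain ⟨p₁, b₁, rfl⟩ := hammingNorm_le_one_iff.1 h₁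
  obtain ⟨p₂, b₂, rfl⟩ := hammingNorm_le_one_iff.1 h₂
  simp only [hammingSyndrome, Fintype.linearCombination_apply_single] at h
  rcases eq_or_ne b₁ 0 with rfl | hb
  · have : b₂ = 0 := by simpa [Projectivization.rep_nonzero] using h.symm
    simp [this]
  · obtain ⟨rfl, rfl⟩ := Projectivization.eq_of_smul_rep_eq hb h
    rfl

theorem existsUnique_hammingSyndrome_eq (s : V) :
    ∃! z, hammingNorm z ≤ 1 ∧ hammingSyndrome F V z = s := by
  suffices ∃ z, hammingNorm z ≤ 1 ∧ hammingSyndrome F V z = s by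
    obtain ⟨z, hz⟩ := this
    exact ⟨z, hz, fun z' hz' => hammingSyndrome_injOn F V hz'.1 hz.1 (hz'.2.trans hz.2.symm)⟩
  rcases eq_or_ne s 0 with rfl | hs
  · exact ⟨0, by simp, map_zero _⟩
  · obtain ⟨a, ha⟩ := Projectivization.exists_smul_eq_mk_rep F s hs
    refine ⟨Pi.single (Projectivization.mk F s hs) (a : F)⁻¹,
      hammingNorm_le_one_iff.2 ⟨_, _, rfl⟩, ?_⟩
    rw [hammingSyndrome, Fintype.linearCombination_apply_single, ← ha, Units.smul_def,
      inv_smul_smul₀ a.ne_zero]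

theorem isPerfectCode_hammingCode : IsPerfectCode (hammingCode F V : Set (ℙ F V → F)) :=
  isPerfectCode_ker _ (existsUnique_hammingSyndrome_eq F V)

theorem natCard_hammingCode :
    Nat.card (hammingCode F V) = Nat.card F ^ (Fintype.card (ℙ F V) - Module.finrank F V) := by
  have hrange : LinearMap.range (hammingSyndrome F V) = ⊤ := LinearMap.range_eq_top.2 fun s =>
    (existsUnique_hammingSyndrome_eq F V s).exists.imp fun _ => And.right
  have := LinearMap.finrank_range_add_finrank_ker (hammingSyndrome F V)
  rw [hrange, finrank_top, Module.finrank_fintype_fun_eq_card] at this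
  rw [hammingCode, Module.natCard_eq_pow_finrank (K := F)]
  congr 1
  omega

end HammingCode

theorem exists_isPerfectCode_natCard_eq (F V : Type*) [Field F] [DecidableEq F] [AddCommGroup V]
    [Module F V] [Nontrivial V] [Finite V] {t : ℕ} (ht : Nat.card (ℙ F V) = t) :
    ∃ D : Set (Fin t → F), IsPerfectCode D ∧
      Nat.card D = Nat.card F ^ (t - Module.finrank F V) := by
  classical
  have := Fintype.ofFinite (ℙ F V)
  let e : Fin t ≃ ℙ F V := (Finite.equivFinOfCardEq ht).symm
  refine ⟨(· ∘ e) '' hammingCode F V, (isPerfectCode_hammingCode F V).image_comp_equiv e, ?_⟩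
  rw [Nat.card_image_of_injective e.surjective.injective_comp_right, ← ht,
    Nat.card_eq_fintype_card (α := ℙ F V)]
  exact natCard_hammingCode F V

section ProjectiveSpaceCount
open Projectivization
variable (F : Type*) [Field F] [Finite F]

theorem natCard_projectivization_fin_succ (r : ℕ) :
    Nat.card (ℙ F (Fin (r + 1) → F)) = Nat.card F * Nat.card (ℙ F (Fin r → F)) + 1 := by
  simp only [card_of_finrank F _ (Module.finrank_fin_fun F), Finset.sum_range_succ', pow_succ',
    ← Finset.mul_sum, pow_zero]

theorem le_natCard_projectivization_fin (r : ℕ) : r ≤ Nat.card (ℙ F (Fin r → F)) := by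
  induction r with
  | zero => exact Nat.zero_le _
  | succ r ih =>
    rw [natCard_projectivization_fin_succ]
    nlinarith [Finite.one_lt_card (α := F)]

end ProjectiveSpaceCount

section BlockSums
variable {τ F : Type*} [Fintype F] [Semiring F]

def blockSum (x : τ × F → F) (j : τ) : F := ∑ i, x (j, i)

def weightedBlockSum (x : τ × F → F) (j : τ) : F := ∑ i, i * x (j, i)

variable [DecidableEq τ] [DecidableEq F]

theorem blockSum_add_single (x : τ × F → F) (j : τ) (i b : F) :
    blockSum (x + Pi.single (j, i) b) = blockSum x + Pi.single j b := by
  funext j'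
  simp [blockSum, Finset.sum_add_distrib, Pi.single_apply, ite_and, eq_comm]

theorem weightedBlockSum_add_single (x : τ × F → F) (j : τ) (i b : F) :
    weightedBlockSum (x + Pi.single (j, i) b) = weightedBlockSum x + Pi.single j (i * b) := by
  funext j'
  simp [weightedBlockSum, mul_add, Finset.sum_add_distrib, Pi.single_apply, ite_and, eq_comm]

end BlockSums

theorem exists_blockSum_weightedBlockSum_eq {τ F : Type*} [Fintype F] [Ring F] (c σ : τ → F) :
    ∃ x : τ × F → F, blockSum x = c ∧ weightedBlockSum x = σ := by
  classical
  exact ⟨fun k => (Pi.single 0 (c k.1 - σ k.1) + Pi.single 1 (σ k.1) : F → F) k.2, by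
    constructor <;> funext j <;>
      simp [blockSum, weightedBlockSum, Finset.sum_add_distrib, mul_add, Pi.single_apply]⟩

section Vasilev
variable {τ F : Type*} [Field F] [Fintype F]

def vasilevCode (D : Set (τ → F)) (f : (τ → F) → (τ → F) → F) : Set (Option (τ × F) → F) :=
  {w | blockSum (w ∘ some) ∈ D ∧ w none = f (blockSum (w ∘ some)) (weightedBlockSum (w ∘ some))}

variable {D : Set (τ → F)} {f : (τ → F) → (τ → F) → F}

theorem eq_of_vasilevCode_eq {g : (τ → F) → (τ → F) → F} (h : vasilevCode D f = vasilevCode D g)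
    {c : τ → F} (hc : c ∈ D) : f c = g c := by
  funext σ
  obtain ⟨x, hx, hσ⟩ := exists_blockSum_weightedBlockSum_eq c σ
  let w : Option (τ × F) → F := fun o => o.elim (f c σ) x
  have hwx : w ∘ some = x := rfl
  have hw : w ∈ vasilevCode D f := ⟨by rwa [hwx, hx], by rw [hwx, hx, hσ]; rfl⟩
  rw [h] at hw
  exact (hw.2.trans (by rw [hwx, hx, hσ]) : w none = g c σ)

variable [Fintype τ] [DecidableEq τ] [DecidableEq F]

theorem existsUnique_vasilevCode_of_mem (hD : IsPerfectCode D) (w : Option (τ × F) → F)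
    (hw : blockSum (w ∘ some) ∈ D) :
    ∃! c, c ∈ vasilevCode D f ∧ ∃ k b, c = w + Pi.single k b := by
  set e := f (blockSum (w ∘ some)) (weightedBlockSum (w ∘ some))
  refine ⟨w + Pi.single none (e - w none), ⟨⟨?_, ?_⟩, none, _, rfl⟩, ?_⟩
  · simpa [add_single_comp_some] using hw
  · simp [add_single_comp_some, e]
  rintro _ ⟨⟨hcD, hce⟩, k | ⟨j, i⟩, b, rfl⟩
  · simp [add_single_comp_some] at hce
    simp [e, ← hce]
  · simp only [add_single_comp_some, Pi.single_some_comp_some, blockSum_add_single] at hcD hce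
    have hb : b = 0 := by
      simpa using hD.eq_of_hammingDist_le_one hw hcD (hammingDist_add_single_le_one _ j b)
    simp_all [e]

theorem existsUnique_vasilevCode_of_not_mem (hD : IsPerfectCode D)
    (hf : ∀ c ∈ D, IsMultiQuasigroup (f c)) (w : Option (τ × F) → F)
    (hw : blockSum (w ∘ some) ∉ D) :
    ∃! c, c ∈ vasilevCode D f ∧ ∃ k b, c = w + Pi.single k b := by
  set s := blockSum (w ∘ some)
  set σ := weightedBlockSum (w ∘ some)
  obtain ⟨_, ⟨hcD, hcd⟩, hcu⟩ := hD s
  have : Nonempty τ := let ⟨j, _⟩ := Function.ne_iff.1 (ne_of_mem_of_not_mem hcD hw); ⟨j⟩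
  obtain ⟨j, δ, rfl⟩ := hammingDist_le_one_iff_exists_eq_add_single.1 hcd
  have hδ : δ ≠ 0 := by
    rintro rfl
    exact hw (by simpa using hcD)
  have hbij : Function.Bijective fun i => f (s + Pi.single j δ) (σ + Pi.single j (i * δ)) := by
    have hupd (i : F) : σ + Pi.single j (i * δ) = Function.update σ j (σ j + i * δ) := by
      funext k
      rcases eq_or_ne k j with rfl | hk
      · simp
      · simp [hk]
    simp only [hupd]
    exact (hf _ hcD j σ).comp <| Finite.injective_iff_bijective.1 fun a b h =>
      mul_right_cancel₀ hδ (add_left_cancel h)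
  obtain ⟨i, hi, hiu⟩ := hbij.existsUnique (w none)
  refine ⟨w + Pi.single (some (j, i)) δ, ⟨⟨?_, ?_⟩, _, _, rfl⟩, ?_⟩
  · simpa [add_single_comp_some, blockSum_add_single] using hcD
  · simpa [add_single_comp_some, blockSum_add_single, weightedBlockSum_add_single] using hi.symm
  rintro _ ⟨⟨hc'D, hc'e⟩, k | ⟨j', i'⟩, b, rfl⟩
  · exact absurd (by simpa [add_single_comp_some] using hc'D) hw
  simp only [add_single_comp_some, Pi.single_some_comp_some, blockSum_add_single,
    weightedBlockSum_add_single] at hc'D hc'e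
  have := hcu _ ⟨hc'D, hammingDist_add_single_le_one _ _ _⟩
  obtain ⟨rfl, rfl⟩ := (Pi.single_eq_single_iff_of_ne_zero hδ).1 (add_left_cancel this)
  obtain rfl := hiu i' (by simpa using hc'e.symm)
  rfl

theorem isPerfectCode_vasilevCode (hD : IsPerfectCode D) (hf : ∀ c ∈ D, IsMultiQuasigroup (f c)) :
    IsPerfectCode (vasilevCode D f) := by
  rw [isPerfectCode_iff_existsUnique_add_single]
  intro w
  by_cases hw : blockSum (w ∘ some) ∈ D
  · exact existsUnique_vasilevCode_of_mem hD w hw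
  · exact existsUnique_vasilevCode_of_not_mem hD hf w hw

theorem card_multiQuasigroup_pow_le_card_perfectCode (hD : IsPerfectCode D) :
    Nat.card {f : (τ → F) → F // IsMultiQuasigroup f} ^ Nat.card D ≤
      Nat.card {C : Set (Option (τ × F) → F) // IsPerfectCode C} := by
  classical
  let extend (fam : D → {f : (τ → F) → F // IsMultiQuasigroup f}) (c : τ → F) : (τ → F) → F :=
    if hc : c ∈ D then fam ⟨c, hc⟩ else 0
  have extend_mem fam {c} (hc : c ∈ D) : extend fam c = fam ⟨c, hc⟩ := dif_pos hc
  rw [← Nat.card_fun]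
  refine Nat.card_le_card_of_injective (fun fam => ⟨vasilevCode D (extend fam),
    isPerfectCode_vasilevCode hD fun c hc => extend_mem fam hc ▸ (fam ⟨c, hc⟩).2⟩) ?_
  intro fam fam' h
  funext ⟨c, hc⟩
  apply Subtype.ext
  rw [← extend_mem fam hc, ← extend_mem fam' hc]
  exact eq_of_vasilevCode_eq (congrArg Subtype.val h) hc

end Vasilev

theorem stmt_6_general {q m n t : ℕ} (F : Type*) [Field F] [Fintype F] [DecidableEq F]
    (hq : Fintype.card F = q) (hm : 2 ≤ m)
    (hn : n = (q ^ m - 1) / (q - 1))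
    (ht' : t = (q ^ (m - 1) - 1) / (q - 1)) :
    q ^ t / (t * (q - 1) + 1) = q ^ (t + 1 - m) ∧
    Nat.card {f : (Fin t → F) → F // IsMultiQuasigroup f} ^ (q ^ t / (t * (q - 1) + 1)) ≤
      Nat.card {C : Set (Fin n → F) // IsPerfectCode C} := by
  obtain ⟨r, rfl⟩ : ∃ r, m = r + 1 := ⟨m - 1, by omega⟩
  have : NeZero r := ⟨by omega⟩
  have hq' : Nat.card F = q := Nat.card_eq_fintype_card.trans hq
  have hcard (k : ℕ) : Nat.card (ℙ F (Fin k → F)) = (q ^ k - 1) / (q - 1) := by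
    rw [Projectivization.card'', Nat.card_fun, Nat.card_fin, hq']
  have htP : Nat.card (ℙ F (Fin r → F)) = t := by rw [hcard, ht', Nat.add_sub_cancel]
  have hnt : n = q * t + 1 := by rw [hn, ← hcard, natCard_projectivization_fin_succ, hq', htP]
  have hqr : q ^ r = t * (q - 1) + 1 := by
    have := Projectivization.card' F (Fin r → F)
    rwa [Nat.card_fun, Nat.card_fin, hq', htP] at this
  have hexp : q ^ t / (t * (q - 1) + 1) = q ^ (t - r) := by
    rw [← hqr, Nat.pow_div (htP ▸ le_natCard_projectivization_fin F r)
      (hq' ▸ Nat.card_pos)]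
  obtain ⟨D, hD, hDcard⟩ := exists_isPerfectCode_natCard_eq F (Fin r → F) htP
  rw [Module.finrank_fin_fun, hq'] at hDcard
  refine ⟨by rw [hexp, Nat.add_sub_add_right], ?_⟩
  calc _ = Nat.card {f : (Fin t → F) → F // IsMultiQuasigroup f} ^ Nat.card D := by
        rw [hexp, hDcard]
    _ ≤ Nat.card {C : Set (Option (Fin t × F) → F) // IsPerfectCode C} :=
        card_multiQuasigroup_pow_le_card_perfectCode hD
    _ ≤ _ := card_perfectCode_le_of_equiv
        (Finite.equivFinOfCardEq (by simp [hq, hnt, mul_comm])).symm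

/-- The number of perfect codes in `F_q^n`, `n = (q^m-1)/(q-1)`, is at least
`Q(t,q) ^ (q^t/(t(q-1)+1))`, where `t = (n-1)/q = (q^(m-1)-1)/(q-1)`, `Q(t,q)` is the
number of `t`-ary quasigroups of order `q`, and the exponent
`q^t/(t(q-1)+1) = q^(t-m+1)` is the cardinality of a perfect code of length `t`. -/
theorem stmt_6 {q m n t : ℕ} (F : Type*) [Field F] [Fintype F] [DecidableEq F]
    (hq : Fintype.card F = q) (hm : 2 ≤ m)
    (hn : n = (q ^ m - 1) / (q - 1))
    (ht : t = (n - 1) / q) (ht' : t = (q ^ (m - 1) - 1) / (q - 1)) :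
    q ^ t / (t * (q - 1) + 1) = q ^ (t + 1 - m) ∧
    Nat.card {f : (Fin t → F) → F // IsMultiQuasigroup f} ^ (q ^ t / (t * (q - 1) + 1)) ≤
      Nat.card {C : Set (Fin n → F) // IsPerfectCode C} :=
  stmt_6_general F hq hm hn ht'
end

section
/- For every positive integer m, the number of m-ary quasigroups of order 3 equals 3 · 2^m. -/
/- Auxiliary finite facts about `Fin 3`, checked by `decide`. -/

lemma fin3_line : ∀ p q : Fin 3 → Fin 3, Function.Bijective p → Function.Bijective q →
    (∀ a, q a ≠ p a) → ∀ a b, q a - p a = q b - p b := by decide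

lemma fin3_two_mul : ∀ d e : Fin 3, d ≠ 0 → e ≠ 0 → e ≠ d → e = d * 2 := by decide

lemma fin3_affine_bij : ∀ d : Fin 3, d ≠ 0 → ∀ c : Fin 3,
    Function.Bijective (fun a : Fin 3 => c + d * a) := by decide

lemma fin3_sub_eq : ∀ a b d : Fin 3, a - b = d → a = b + d := by decide

/-- A function on tuples which is invariant under single-coordinate updates is constant. -/
lemma const_of_update {m : ℕ} (P : (Fin m → Fin 3) → Fin 3)
    (hp : ∀ x i b, P (Function.update x i b) = P x) (x y : Fin m → Fin 3) : P x = P y := by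
  classical
  have key : ∀ s : Finset (Fin m), ∀ x y : Fin m → Fin 3,
      (∀ i, i ∉ s → x i = y i) → P x = P y := by
    intro s
    induction s using Finset.induction with
    | empty =>
      intro x y h
      congr 1
      funext i
      exact h i (by simp)
    | @insert a s ha ih =>
      intro x y h
      have h1 : P x = P (Function.update x a (y a)) := (hp x a (y a)).symm
      rw [h1]
      apply ih
      intro i hi
      by_cases hia : i = a
      · subst hia; simp
      · rw [Function.update_of_ne hia]
        exact h i (by simp [hia, hi])
  exact key Finset.univ x y (by simp)

/-- Structure theorem: every `(m+1)`-ary quasigroup of order 3 splits off its last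
coordinate linearly. -/
lemma quasi_split {m : ℕ} (f : (Fin (m + 1) → Fin 3) → Fin 3) (hf : IsMultiQuasigroup f) :
    ∃ d : Fin 3, d ≠ 0 ∧ IsMultiQuasigroup (fun x : Fin m → Fin 3 => f (Fin.snoc x 0)) ∧
      ∀ z, f z = f (Fin.snoc (Fin.init z) 0) + d * z (Fin.last m) := by
  classical
  set g : Fin 3 → (Fin m → Fin 3) → Fin 3 := fun a x => f (Fin.snoc x a) with hg
  -- bijectivity in the last coordinate
  have hlast : ∀ x : Fin m → Fin 3, Function.Bijective (fun a => g a x) := by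
    intro x
    have := hf (Fin.last m) (Fin.snoc x 0)
    convert this using 2 with a
    rw [Fin.update_snoc_last]
  -- bijectivity in earlier coordinates, for every fixed last coordinate
  have hmid : ∀ (c : Fin 3) (i : Fin m) (x : Fin m → Fin 3),
      Function.Bijective (fun a => g c (Function.update x i a)) := by
    intro c i x
    have := hf i.castSucc (Fin.snoc x c)
    convert this using 2 with a
    rw [hg]
    simp only [Fin.snoc_update]
  -- pointwise distinctness
  have hne : ∀ (a b : Fin 3) (x : Fin m → Fin 3), a ≠ b → g a x ≠ g b x := by
    intro a b x hab h
    exact hab ((hlast x).injective h)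
  -- differences are constant
  have hconst : ∀ c : Fin 3, c ≠ 0 → ∀ x y, g c x - g 0 x = g c y - g 0 y := by
    intro c hc x y
    refine const_of_update (fun x => g c x - g 0 x) (fun x i b => ?_) x y
    have := fin3_line (fun t => g 0 (Function.update x i t)) (fun t => g c (Function.update x i t))
      (hmid 0 i x) (hmid c i x) (fun t => hne c 0 (Function.update x i t) hc) b (x i)
    simpa [Function.update_eq_self] using this
  set z0 : Fin m → Fin 3 := fun _ => 0 with hz0
  set d : Fin 3 := g 1 z0 - g 0 z0 with hd
  set e : Fin 3 := g 2 z0 - g 0 z0 with he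
  have hd1 : ∀ x, g 1 x = g 0 x + d := fun x => fin3_sub_eq _ _ _ (hconst 1 (by decide) x z0)
  have he1 : ∀ x, g 2 x = g 0 x + e := fun x => fin3_sub_eq _ _ _ (hconst 2 (by decide) x z0)
  have hdne : d ≠ 0 := by
    intro h
    apply hne 1 0 z0 (by decide)
    have := hd1 z0
    rw [h, add_zero] at this
    exact this
  have hene : e ≠ 0 := by
    intro h
    apply hne 2 0 z0 (by decide)
    have := he1 z0
    rw [h, add_zero] at this
    exact this
  have hed : e ≠ d := by
    intro h
    apply hne 2 1 z0 (by decide)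
    rw [hd1, he1, h]
  have he2 : e = d * 2 := fin3_two_mul d e hdne hene hed
  refine ⟨d, hdne, ?_, ?_⟩
  · intro i x
    exact hmid 0 i x
  · intro z
    have hz : f z = g (z (Fin.last m)) (Fin.init z) := by
      rw [hg]
      simp only [Fin.snoc_init_self]
    rw [hz]
    show g (z (Fin.last m)) (Fin.init z) = g 0 (Fin.init z) + d * z (Fin.last m)
    have : ∀ a : Fin 3, g a (Fin.init z) = g 0 (Fin.init z) + d * a := by
      intro a
      have ha : ∀ b : Fin 3, b = 0 ∨ b = 1 ∨ b = 2 := by decide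
      rcases ha a with h | h | h <;> subst h
      · rw [mul_zero, add_zero]
      · rw [hd1, mul_one]
      · rw [he1, he2]
    exact this _

lemma snoc_quasi {m : ℕ} (g : (Fin m → Fin 3) → Fin 3) (hgq : IsMultiQuasigroup g)
    (d : Fin 3) (hd : d ≠ 0) :
    IsMultiQuasigroup (fun z : Fin (m + 1) → Fin 3 => g (Fin.init z) + d * z (Fin.last m)) := by
  intro i z
  induction i using Fin.lastCases with
  | last =>
    have heq : (fun a => g (Fin.init (Function.update z (Fin.last m) a)) +
        d * Function.update z (Fin.last m) a (Fin.last m)) =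
        (fun a => g (Fin.init z) + d * a) := by
      funext a
      rw [Fin.init_update_last, Function.update_self]
    show Function.Bijective fun a => g (Fin.init (Function.update z (Fin.last m) a)) +
        d * Function.update z (Fin.last m) a (Fin.last m)
    rw [heq]
    exact fin3_affine_bij d hd _
  | cast i =>
    have heq : (fun a => g (Fin.init (Function.update z i.castSucc a)) +
        d * Function.update z i.castSucc a (Fin.last m)) =
        (fun y => y + d * z (Fin.last m)) ∘
          (fun a => g (Function.update (Fin.init z) i a)) := by
      funext a
      simp [Fin.init_update_castSucc, Function.update_of_ne (Fin.castSucc_lt_last i).ne']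
    show Function.Bijective fun a => g (Fin.init (Function.update z i.castSucc a)) +
        d * Function.update z i.castSucc a (Fin.last m)
    rw [heq]
    exact ((Equiv.addRight (d * z (Fin.last m))).bijective).comp (hgq i (Fin.init z))

/-- The splitting equivalence. -/
noncomputable def quasiEquiv (m : ℕ) :
    {f : (Fin (m + 1) → Fin 3) → Fin 3 // IsMultiQuasigroup f} ≃
      {f : (Fin m → Fin 3) → Fin 3 // IsMultiQuasigroup f} × {d : Fin 3 // d ≠ 0} where
  toFun f :=
    (⟨fun x => f.1 (Fin.snoc x 0), (quasi_split f.1 f.2).choose_spec.2.1⟩,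
     ⟨(quasi_split f.1 f.2).choose, (quasi_split f.1 f.2).choose_spec.1⟩)
  invFun gd :=
    ⟨fun z => gd.1.1 (Fin.init z) + gd.2.1 * z (Fin.last m), snoc_quasi _ gd.1.2 _ gd.2.2⟩
  left_inv f := by
    obtain ⟨f, hf⟩ := f
    refine Subtype.ext (funext fun z => ?_)
    show f (Fin.snoc (Fin.init z) 0) + (quasi_split f hf).choose * z (Fin.last m) = f z
    exact ((quasi_split f hf).choose_spec.2.2 z).symm
  right_inv gd := by
    obtain ⟨⟨g, hgq⟩, ⟨d, hd⟩⟩ := gd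
    have hcancel : ∀ a d d' : Fin 3, a + d * 1 = a + d * 0 + d' * 1 → d' = d := by decide
    set F : (Fin (m + 1) → Fin 3) → Fin 3 :=
      fun z => g (Fin.init z) + d * z (Fin.last m) with hF
    have hFq : IsMultiQuasigroup F := snoc_quasi g hgq d hd
    refine Prod.ext (Subtype.ext ?_) (Subtype.ext ?_)
    · funext x
      show F (Fin.snoc x (0 : Fin 3) : Fin (m + 1) → Fin 3) = g x
      rw [hF]
      simp
    · set c : Fin m → Fin 3 := fun _ => 0 with hc
      set w1 : Fin (m + 1) → Fin 3 := Fin.snoc c 1 with hw1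
      have hspec := (quasi_split F hFq).choose_spec.2.2 w1
      have h1 : Fin.init w1 = c := by rw [hw1, Fin.init_snoc]
      have h2 : w1 (Fin.last m) = 1 := by rw [hw1, Fin.snoc_last]
      rw [h1, h2] at hspec
      show (quasi_split F hFq).choose = d
      have hz1 : F w1 = g c + d * 1 := by
        rw [hF, hw1]; simp [Fin.init_snoc, Fin.snoc_last]
      have hz0 : F (Fin.snoc c 0) = g c + d * 0 := by
        rw [hF]; simp [Fin.init_snoc, Fin.snoc_last]
      rw [hz1, hz0] at hspec
      exact hcancel _ _ _ hspec

theorem key_count : ∀ m : ℕ,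
    Nat.card {f : (Fin m → Fin 3) → Fin 3 // IsMultiQuasigroup f} = 3 * 2 ^ m := by
  intro m
  induction m with
  | zero =>
    have h0 : ∀ f : (Fin 0 → Fin 3) → Fin 3, IsMultiQuasigroup f := by
      intro f i
      exact i.elim0
    have e : {f : (Fin 0 → Fin 3) → Fin 3 // IsMultiQuasigroup f} ≃ Fin 3 :=
      (Equiv.subtypeUnivEquiv h0).trans (Equiv.funUnique (Fin 0 → Fin 3) (Fin 3))
    rw [Nat.card_congr e]
    simp
  | succ m ih =>
    rw [Nat.card_congr (quasiEquiv m), Nat.card_prod, ih]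
    have : Nat.card {d : Fin 3 // d ≠ 0} = 2 := by
      rw [Nat.card_eq_fintype_card]
      decide
    rw [this]
    ring

/-- The number of `m`-ary quasigroups of order 3 equals `3 * 2 ^ m`. -/
theorem stmt_7 (m : ℕ) (hm : 1 ≤ m) :
    Nat.card {f : (Fin m → Fin 3) → Fin 3 // IsMultiQuasigroup f} = 3 * 2 ^ m := by
  exact key_count m
end

section
/- For all positive integers m, q_1, q_2 with q_1, q_2 ≥ 1, the number of m-ary quasigroups satisfies Q(m, q_1 q_2) ≥ Q(m, q_1) · Q(m, q_2)^{q_1^m}. -/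
section Aux

variable {m q1 q2 : ℕ}

/-- Product construction of quasigroups. -/
def myConstruct (g : (Fin m → Fin q1) → Fin q1)
    (H : (Fin m → Fin q1) → (Fin m → Fin q2) → Fin q2) :
    (Fin m → Fin (q1 * q2)) → Fin (q1 * q2) :=
  fun x => finProdFinEquiv
    (g fun i => (finProdFinEquiv.symm (x i)).1,
     H (fun i => (finProdFinEquiv.symm (x i)).1) fun i => (finProdFinEquiv.symm (x i)).2)

lemma comp_update_fst (x : Fin m → Fin (q1 * q2)) (i : Fin m) (a : Fin (q1 * q2)) :
    (fun j => (finProdFinEquiv.symm (Function.update x i a j)).1) =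
      Function.update (fun j => (finProdFinEquiv.symm (x j)).1) i
        (finProdFinEquiv.symm a).1 := by
  funext j
  rcases eq_or_ne j i with rfl | h
  · simp
  · simp [Function.update_of_ne h]

lemma comp_update_snd (x : Fin m → Fin (q1 * q2)) (i : Fin m) (a : Fin (q1 * q2)) :
    (fun j => (finProdFinEquiv.symm (Function.update x i a j)).2) =
      Function.update (fun j => (finProdFinEquiv.symm (x j)).2) i
        (finProdFinEquiv.symm a).2 := by
  funext j
  rcases eq_or_ne j i with rfl | h
  · simp
  · simp [Function.update_of_ne h]

lemma myConstruct_qg {g : (Fin m → Fin q1) → Fin q1}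
    {H : (Fin m → Fin q1) → (Fin m → Fin q2) → Fin q2}
    (hg : IsMultiQuasigroup g) (hH : ∀ y, IsMultiQuasigroup (H y)) :
    IsMultiQuasigroup (myConstruct g H) := by
  intro i x
  rw [← Finite.injective_iff_bijective]
  intro a b hab
  simp only [myConstruct, comp_update_fst, comp_update_snd] at hab
  have hab2 := finProdFinEquiv.injective hab
  have h1 : (finProdFinEquiv.symm a).1 = (finProdFinEquiv.symm b).1 :=
    (hg i _).injective (congrArg Prod.fst hab2)
  rw [h1] at hab2
  have h2 : (finProdFinEquiv.symm a).2 = (finProdFinEquiv.symm b).2 :=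
    (hH _ i _).injective (congrArg Prod.snd hab2)
  have : finProdFinEquiv.symm a = finProdFinEquiv.symm b := Prod.ext h1 h2
  exact finProdFinEquiv.symm.injective this

lemma myConstruct_inj (h2 : 1 ≤ q2) {g g' : (Fin m → Fin q1) → Fin q1}
    {H H' : (Fin m → Fin q1) → (Fin m → Fin q2) → Fin q2}
    (h : myConstruct g H = myConstruct g' H') : g = g' ∧ H = H' := by
  have key : ∀ (y : Fin m → Fin q1) (z : Fin m → Fin q2),
      g y = g' y ∧ H y z = H' y z := by
    intro y z
    have := congrFun h (fun i => finProdFinEquiv (y i, z i))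
    simp only [myConstruct, Equiv.symm_apply_apply] at this
    have := finProdFinEquiv.injective this
    exact ⟨congrArg Prod.fst this, congrArg Prod.snd this⟩
  have hz : Nonempty (Fin q2) := ⟨⟨0, h2⟩⟩
  obtain ⟨z0⟩ := hz
  constructor
  · funext y; exact (key y (fun _ => z0)).1
  · funext y z; exact (key y z).2

end Aux

/-- Q(m, q₁q₂) ≥ Q(m, q₁) · Q(m, q₂)^(q₁^m) for the numbers of multary quasigroups. -/
theorem stmt_8 (m q1 q2 : ℕ) (hm : 1 ≤ m) (h1 : 1 ≤ q1) (h2 : 1 ≤ q2) :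
    Nat.card {f : (Fin m → Fin q1) → Fin q1 // IsMultiQuasigroup f} *
      Nat.card {f : (Fin m → Fin q2) → Fin q2 // IsMultiQuasigroup f} ^ (q1 ^ m) ≤
      Nat.card {f : (Fin m → Fin (q1 * q2)) → Fin (q1 * q2) // IsMultiQuasigroup f} := by
  classical
  set A := {f : (Fin m → Fin q1) → Fin q1 // IsMultiQuasigroup f}
  set B := {f : (Fin m → Fin q2) → Fin q2 // IsMultiQuasigroup f}
  set C := {f : (Fin m → Fin (q1 * q2)) → Fin (q1 * q2) // IsMultiQuasigroup f}
  have hcard : Nat.card A * Nat.card B ^ (q1 ^ m) =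
      Nat.card (A × ((Fin m → Fin q1) → B)) := by
    rw [Nat.card_prod, Nat.card_fun]
    congr 1
    rw [Nat.card_fun]
    simp [Nat.card_eq_fintype_card]
  rw [hcard]
  apply Nat.card_le_card_of_injective
    (f := fun p : A × ((Fin m → Fin q1) → B) =>
      (⟨myConstruct p.1.1 (fun y => (p.2 y).1),
        myConstruct_qg p.1.2 (fun y => (p.2 y).2)⟩ : C))
  intro p p' hpp
  have h : myConstruct p.1.1 (fun y => (p.2 y).1) =
      myConstruct p'.1.1 (fun y => (p'.2 y).1) := Subtype.ext_iff.mp hpp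
  obtain ⟨hg, hH⟩ := myConstruct_inj h2 h
  have e1 : p.1 = p'.1 := Subtype.ext hg
  have e2 : p.2 = p'.2 := by
    funext y
    exact Subtype.ext (congrFun hH y)
  exact Prod.ext e1 e2
end

section
/- For every positive integer m, the number of m-ary quasigroups of order 5 satisfies Q(m, 5) ≥ 2^{3^{m/3 − 0.072}}, where the right-hand side is a real number (with real exponentiation). -/
/-!
Fix two symbols `a ≠ b` of a quasigroup `f`. A *switching set* is a set `A` of arguments on which
`f` takes values in `{a, b}` and which contains, with each of its points, every point on the same
line where `f` is still `a` or `b`. Exchanging `a` and `b` in the values of `f` on `A` gives a new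
quasigroup, so a family of `n` nonempty disjoint switching sets yields `2 ^ n` distinct
quasigroups. Composing two quasigroups through a binary quasigroup in which `{a, b}` is a
subquasigroup multiplies their numbers of switching sets. Starting from explicit quasigroups of
order 5 and arities 2, 3, 4 with 2, 3, 4 switching sets and composing `k` times with the ternary
one gives `3 ^ k * r` sets in arity `3 k + r`. The constant `0.072` is dictated by the case
`r = 4`: `3 ^ (4 / 3 - 0.072) ≤ 4` holds with little room to spare.
-/

open Function Set

theorem Pairwise.mem_biUnion_iff {α κ : Type*} {A : κ → Set α} (hA : Pairwise (Disjoint on A))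
    {x : α} {j : κ} (hx : x ∈ A j) (s : Finset κ) : x ∈ ⋃ k ∈ s, A k ↔ j ∈ s := by
  refine ⟨fun h => ?_, fun h => mem_biUnion h hx⟩
  obtain ⟨k, hk, hxk⟩ := mem_iUnion₂.1 h
  obtain rfl : k = j := by_contra fun hkj => disjoint_left.1 (hA hkj) hxk hx
  exact hk

section Switching

variable {ι S : Type*} (a b : S) [DecidableEq S]

open scoped Classical in
noncomputable def switch (f : (ι → S) → S) (A : Set (ι → S)) : (ι → S) → S :=
  A.piecewise (Equiv.swap a b ∘ f) f

variable {a b} {f : (ι → S) → S} {A : Set (ι → S)} {x : ι → S}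

theorem switch_apply_of_mem (hx : x ∈ A) :
    switch a b f A x = Equiv.swap a b (f x) := by
  classical
  exact piecewise_eq_of_mem _ _ _ hx

theorem switch_apply_of_notMem (hx : x ∉ A) :
    switch a b f A x = f x := by
  classical
  exact piecewise_eq_of_notMem _ _ _ hx

end Switching

section SwitchingSets

variable {ι S : Type*} [DecidableEq ι] (a b : S)

def IsSwitchingSet (f : (ι → S) → S) (A : Set (ι → S)) : Prop :=
  MapsTo f A {a, b} ∧ ∀ x ∈ A, ∀ i c, f (update x i c) ∈ ({a, b} : Set S) → update x i c ∈ A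

structure IsSwitchingFamily {κ : Type*} (f : (ι → S) → S) (A : κ → Set (ι → S)) : Prop where
  isSwitchingSet : ∀ j, IsSwitchingSet a b f (A j)
  nonempty : ∀ j, (A j).Nonempty
  pairwise_disjoint : Pairwise (Disjoint on A)

variable {a b} {f : (ι → S) → S} {A : Set (ι → S)}

theorem IsSwitchingSet.update_mem_iff (hA : IsSwitchingSet a b f A) {x : ι → S} {i : ι}
    {c₀ : S} (h₀ : update x i c₀ ∈ A) (c : S) :
    update x i c ∈ A ↔ f (update x i c) ∈ ({a, b} : Set S) :=
  ⟨fun h => hA.1 h, fun h => by simpa using hA.2 _ h₀ i c (by simpa using h)⟩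

theorem IsMultiQuasigroup.switch [DecidableEq S] (hf : IsMultiQuasigroup f)
    (hA : IsSwitchingSet a b f A) : IsMultiQuasigroup (switch a b f A) := by
  intro i x
  by_cases hline : ∃ c₀, update x i c₀ ∈ A
  · obtain ⟨c₀, h₀⟩ := hline
    convert (Equiv.swap a b).bijective.comp (hf i x) using 1
    funext c
    by_cases hc : update x i c ∈ A
    · exact switch_apply_of_mem hc
    · have hab : f (update x i c) ∉ ({a, b} : Set S) := mt (hA.update_mem_iff h₀ c).2 hc
      simp only [mem_insert_iff, mem_singleton_iff, not_or] at hab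
      rw [switch_apply_of_notMem hc, comp_apply, Equiv.swap_apply_of_ne_of_ne hab.1 hab.2]
  · push Not at hline
    convert hf i x using 1
    funext c
    exact switch_apply_of_notMem (hline c)

theorem IsSwitchingSet.iUnion {κ : Sort*} {A : κ → Set (ι → S)}
    (hA : ∀ j, IsSwitchingSet a b f (A j)) : IsSwitchingSet a b f (⋃ j, A j) := by
  refine ⟨mapsTo_iUnion.2 fun j => (hA j).1, fun x hx i c hc => ?_⟩
  obtain ⟨j, hj⟩ := mem_iUnion.1 hx
  exact mem_iUnion.2 ⟨j, (hA j).2 x hj i c hc⟩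

theorem IsSwitchingFamily.two_pow_card_le [DecidableEq S] [Finite ι] [Finite S] {κ : Type*}
    [Fintype κ] (hab : a ≠ b) (hf : IsMultiQuasigroup f) {A : κ → Set (ι → S)}
    (hA : IsSwitchingFamily a b f A) :
    2 ^ Fintype.card κ ≤ Nat.card {g : (ι → S) → S // IsMultiQuasigroup g} := by
  classical
  let F : Finset κ → {g : (ι → S) → S // IsMultiQuasigroup g} := fun s =>
    ⟨switch a b f (⋃ j ∈ s, A j),
      hf.switch (.iUnion fun j => .iUnion fun _ => hA.isSwitchingSet j)⟩
  have hF : Injective F := by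
    intro s t hst
    ext j
    obtain ⟨x, hx⟩ := hA.nonempty j
    have hval : switch a b f (⋃ j ∈ s, A j) x = switch a b f (⋃ j ∈ t, A j) x :=
      congrArg (fun g => g.1 x) hst
    have hswap : Equiv.swap a b (f x) ≠ f x :=
      Equiv.swap_apply_ne_self_iff.2 ⟨hab, (hA.isSwitchingSet j).1 hx⟩
    have hvalue : ∀ u : Finset κ, switch a b f (⋃ k ∈ u, A k) x =
        if j ∈ u then Equiv.swap a b (f x) else f x := by
      intro u
      split_ifs with h
      · exact switch_apply_of_mem ((hA.pairwise_disjoint.mem_biUnion_iff hx u).2 h)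
      · exact switch_apply_of_notMem (mt (hA.pairwise_disjoint.mem_biUnion_iff hx u).1 h)
    rw [hvalue, hvalue] at hval
    split_ifs at hval with hs ht ht
    · exact iff_of_true hs ht
    · exact absurd hval hswap
    · exact absurd hval.symm hswap
    · exact iff_of_false hs ht
  simpa [Fintype.card_finset] using Nat.card_le_card_of_injective F hF

end SwitchingSets

section Composition

variable {ι ι' S : Type*} [DecidableEq ι] [DecidableEq ι']

def compose (P : S → S → S) (f : (ι → S) → S) (g : (ι' → S) → S) : (ι ⊕ ι' → S) → S :=
  fun z => P (f (z ∘ Sum.inl)) (g (z ∘ Sum.inr))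

variable {P : S → S → S} {f : (ι → S) → S} {g : (ι' → S) → S}

theorem compose_update_inl (z : ι ⊕ ι' → S) (i : ι) (c : S) :
    compose P f g (update z (.inl i) c) = P (f (update (z ∘ Sum.inl) i c)) (g (z ∘ Sum.inr)) := by
  simp [compose]

theorem compose_update_inr (z : ι ⊕ ι' → S) (i : ι') (c : S) :
    compose P f g (update z (.inr i) c) = P (f (z ∘ Sum.inl)) (g (update (z ∘ Sum.inr) i c)) := by
  simp [compose]

theorem IsMultiQuasigroup.compose (hP₁ : ∀ v, Bijective (P · v)) (hP₂ : ∀ u, Bijective (P u))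
    (hf : IsMultiQuasigroup f) (hg : IsMultiQuasigroup g) :
    IsMultiQuasigroup (compose P f g) := by
  rintro (i | i) z
  · simp only [compose_update_inl]
    exact (hP₁ _).comp (hf i _)
  · simp only [compose_update_inr]
    exact (hP₂ _).comp (hg i _)

variable {a b : S}

theorem IsSwitchingSet.compose (hP₁ : ∀ v ∈ ({a, b} : Set S), (P · v) ⁻¹' {a, b} = {a, b})
    (hP₂ : ∀ u ∈ ({a, b} : Set S), P u ⁻¹' {a, b} = {a, b})
    {A : Set (ι → S)} {B : Set (ι' → S)} (hA : IsSwitchingSet a b f A)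
    (hB : IsSwitchingSet a b g B) :
    IsSwitchingSet a b (compose P f g) ((· ∘ Sum.inl) ⁻¹' A ∩ (· ∘ Sum.inr) ⁻¹' B) := by
  refine ⟨fun z ⟨hzA, hzB⟩ => ?_, ?_⟩
  · have hu := hA.1 hzA
    rw [← hP₁ _ (hB.1 hzB)] at hu
    exact hu
  · rintro z ⟨hzA, hzB⟩ (i | i) c hc
    · rw [compose_update_inl] at hc
      rw [mem_inter_iff, mem_preimage, mem_preimage, Sum.update_inl_comp_inl,
        Sum.update_inl_comp_inr]
      refine ⟨hA.2 _ hzA i c ?_, hzB⟩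
      rw [← hP₁ _ (hB.1 hzB)]
      exact hc
    · rw [compose_update_inr] at hc
      rw [mem_inter_iff, mem_preimage, mem_preimage, Sum.update_inr_comp_inl,
        Sum.update_inr_comp_inr]
      refine ⟨hzA, hB.2 _ hzB i c ?_⟩
      rw [← hP₂ _ (hA.1 hzA)]
      exact hc

theorem IsSwitchingFamily.compose (hP₁ : ∀ v ∈ ({a, b} : Set S), (P · v) ⁻¹' {a, b} = {a, b})
    (hP₂ : ∀ u ∈ ({a, b} : Set S), P u ⁻¹' {a, b} = {a, b}) {κ κ' : Type*}
    {A : κ → Set (ι → S)} {B : κ' → Set (ι' → S)} (hA : IsSwitchingFamily a b f A)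
    (hB : IsSwitchingFamily a b g B) :
    IsSwitchingFamily a b (compose P f g)
      fun j : κ × κ' => (· ∘ Sum.inl) ⁻¹' A j.1 ∩ (· ∘ Sum.inr) ⁻¹' B j.2 where
  isSwitchingSet j := (hA.isSwitchingSet j.1).compose hP₁ hP₂ (hB.isSwitchingSet j.2)
  nonempty j := by
    obtain ⟨x, hx⟩ := hA.nonempty j.1
    obtain ⟨y, hy⟩ := hB.nonempty j.2
    exact ⟨Sum.elim x y, hx, hy⟩
  pairwise_disjoint := by
    rintro ⟨j, j'⟩ ⟨k, k'⟩ hne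
    by_cases hjk : j = k
    · have hjk' : j' ≠ k' := fun h => hne (by rw [hjk, h])
      exact ((hB.pairwise_disjoint hjk').preimage _).mono inter_subset_right inter_subset_right
    · exact ((hA.pairwise_disjoint hjk).preimage _).mono inter_subset_left inter_subset_left

end Composition

section Reindexing

variable {ι ι' S κ κ' : Type*} [DecidableEq ι] [DecidableEq ι'] {f : (ι → S) → S}

theorem IsMultiQuasigroup.comp_equiv (hf : IsMultiQuasigroup f) (e : ι ≃ ι') :
    IsMultiQuasigroup fun z : ι' → S => f (z ∘ e) := by
  intro i z
  simpa only [update_comp_equiv] using hf (e.symm i) (z ∘ e)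

theorem IsSwitchingFamily.comp_equiv {a b : S} {A : κ → Set (ι → S)}
    (hA : IsSwitchingFamily a b f A) (e : ι ≃ ι') (e' : κ' ≃ κ) :
    IsSwitchingFamily a b (fun z : ι' → S => f (z ∘ e)) fun j => (· ∘ e) ⁻¹' A (e' j) where
  isSwitchingSet j := by
    refine ⟨fun z hz => (hA.isSwitchingSet _).1 hz, fun z hz i c hc => ?_⟩
    rw [mem_preimage, update_comp_equiv]
    exact (hA.isSwitchingSet _).2 _ hz _ c (by simpa only [update_comp_equiv] using hc)
  nonempty j := by
    obtain ⟨x, hx⟩ := hA.nonempty (e' j)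
    exact ⟨x ∘ e.symm, by simpa [comp_assoc] using hx⟩
  pairwise_disjoint _ _ hne := (hA.pairwise_disjoint (e'.injective.ne hne)).preimage _

end Reindexing

section Existence

variable (S : Type*) (a b : S)

def HasSwitchingFamily (ι κ : Type*) [DecidableEq ι] : Prop :=
  ∃ f : (ι → S) → S, IsMultiQuasigroup f ∧ ∃ A : κ → Set (ι → S), IsSwitchingFamily a b f A

variable {S a b} {ι ι' κ κ' : Type*} [DecidableEq ι] [DecidableEq ι']

theorem HasSwitchingFamily.congr (h : HasSwitchingFamily S a b ι κ) (e : ι ≃ ι') (e' : κ ≃ κ') :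
    HasSwitchingFamily S a b ι' κ' :=
  let ⟨_, hf, _, hA⟩ := h
  ⟨_, hf.comp_equiv e, _, hA.comp_equiv e e'.symm⟩

theorem HasSwitchingFamily.sum {P : S → S → S} (hP₁ : ∀ v, Bijective (P · v))
    (hP₂ : ∀ u, Bijective (P u)) (hP₁' : ∀ v ∈ ({a, b} : Set S), (P · v) ⁻¹' {a, b} = {a, b})
    (hP₂' : ∀ u ∈ ({a, b} : Set S), P u ⁻¹' {a, b} = {a, b})
    (h : HasSwitchingFamily S a b ι κ) (h' : HasSwitchingFamily S a b ι' κ') :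
    HasSwitchingFamily S a b (ι ⊕ ι') (κ × κ') :=
  let ⟨_, hf, _, hA⟩ := h
  let ⟨_, hg, _, hB⟩ := h'
  ⟨_, hf.compose hP₁ hP₂ hg, _, hA.compose hP₁' hP₂' hB⟩

theorem HasSwitchingFamily.two_pow_card_le [DecidableEq S] [Finite ι] [Finite S] [Fintype κ]
    (hab : a ≠ b) (h : HasSwitchingFamily S a b ι κ) :
    2 ^ Fintype.card κ ≤ Nat.card {g : (ι → S) → S // IsMultiQuasigroup g} :=
  let ⟨_, hf, _, hA⟩ := h
  hA.two_pow_card_le hab hf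

end Existence

theorem HasSwitchingFamily.of_label {S ι : Type*} [DecidableEq ι] {a b : S} {n : ℕ}
    {f : (ι → S) → S} (hf : IsMultiQuasigroup f) (L : (ι → S) → Fin (n + 1))
    (hL : ∀ j : Fin n, IsSwitchingSet a b f (L ⁻¹' {j.castSucc}))
    (hne : ∀ j : Fin n, ∃ x, L x = j.castSucc) : HasSwitchingFamily S a b ι (Fin n) :=
  ⟨f, hf, _, hL, hne, (pairwise_disjoint_fiber L).comp_of_injective (Fin.castSucc_injective n)⟩

theorem card_perm_le_card_unary (S : Type*) [Finite S] :
    Nat.card (Equiv.Perm S) ≤ Nat.card {f : (Fin 1 → S) → S // IsMultiQuasigroup f} := by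
  refine Nat.card_le_card_of_injective (fun σ => ⟨fun z => σ (z 0), fun i x => ?_⟩) ?_
  · obtain rfl := Subsingleton.elim i 0
    simpa using σ.bijective
  · intro σ τ h
    ext c
    exact congrFun (congrArg Subtype.val h) fun _ => c

/-- Both sides are compared after raising them to the power `375`, as `0.072 = 27 / 375`. -/
theorem three_rpow_le_of_pow_le {r c : ℕ} (h : (3 ^ r) ^ 125 ≤ 3 ^ 27 * (c ^ 3) ^ 125) :
    (3 : ℝ) ^ ((r : ℝ) / 3 - 0.072) ≤ c := by
  have hpow : ((3 : ℝ) ^ r) ^ 125 = 3 ^ 27 * ((3 : ℝ) ^ ((r : ℝ) / 3 - 0.072)) ^ 375 := by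
    rw [← Real.rpow_mul_natCast (by norm_num), ← Real.rpow_natCast 3 27,
      ← Real.rpow_add (by norm_num), ← pow_mul, ← Real.rpow_natCast]
    norm_num
    ring_nf
  refine le_of_pow_le_pow_left₀ (by norm_num : 375 ≠ 0) c.cast_nonneg ?_
  have hc : ((3 ^ r) ^ 125 : ℝ) ≤ 3 ^ 27 * ((c : ℝ) ^ 3) ^ 125 := by exact_mod_cast h
  rw [hpow, ← pow_mul] at hc
  exact le_of_mul_le_mul_left hc (by norm_num)

theorem three_rpow_le_three_pow_mul {r c : ℕ} (k : ℕ)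
    (h : (3 : ℝ) ^ ((r : ℝ) / 3 - 0.072) ≤ c) :
    (3 : ℝ) ^ (((3 * k + r : ℕ) : ℝ) / 3 - 0.072) ≤ (3 ^ k * c : ℕ) := by
  have hexp : ((3 * k + r : ℕ) : ℝ) / 3 - 0.072 = k + ((r : ℝ) / 3 - 0.072) := by
    push_cast
    ring
  rw [hexp, Real.rpow_add (by norm_num), Real.rpow_natCast]
  push_cast
  gcongr

def ternaryQuasigroup : Fin 5 → Fin 5 → Fin 5 → Fin 5 :=
  ![![![2, 4, 1, 3, 0], ![4, 0, 2, 1, 3], ![3, 1, 4, 0, 2], ![1, 3, 0, 2, 4], ![0, 2, 3, 4, 1]],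
  ![![3, 2, 4, 0, 1], ![0, 4, 1, 3, 2], ![1, 3, 0, 2, 4], ![2, 1, 3, 4, 0], ![4, 0, 2, 1, 3]],
  ![![4, 0, 3, 1, 2], ![1, 3, 0, 2, 4], ![0, 2, 1, 4, 3], ![3, 4, 2, 0, 1], ![2, 1, 4, 3, 0]],
  ![![1, 3, 0, 2, 4], ![2, 1, 3, 4, 0], ![4, 0, 2, 3, 1], ![0, 2, 4, 1, 3], ![3, 4, 1, 0, 2]],
  ![![0, 1, 2, 4, 3], ![3, 2, 4, 0, 1], ![2, 4, 3, 1, 0], ![4, 0, 1, 3, 2], ![1, 3, 0, 2, 4]]]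

/-- The switching set containing each point; the label `3` marks points in none of them. -/
def ternaryLabel : Fin 5 → Fin 5 → Fin 5 → Fin 4 :=
  ![![![3, 3, 2, 3, 2], ![3, 1, 3, 1, 3], ![3, 1, 3, 1, 3], ![2, 3, 2, 3, 3], ![2, 3, 3, 3, 2]],
  ![![3, 3, 3, 2, 2], ![0, 3, 0, 3, 3], ![0, 3, 0, 3, 3], ![3, 2, 3, 3, 2], ![3, 2, 3, 2, 3]],
  ![![3, 2, 3, 2, 3], ![0, 3, 0, 3, 3], ![0, 3, 0, 3, 3], ![3, 3, 3, 2, 2], ![3, 2, 3, 3, 2]],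
  ![![2, 3, 2, 3, 3], ![3, 1, 3, 3, 1], ![3, 1, 3, 3, 1], ![2, 3, 3, 2, 3], ![3, 3, 2, 2, 3]],
  ![![2, 2, 3, 3, 3], ![3, 3, 3, 1, 1], ![3, 3, 3, 1, 1], ![3, 2, 2, 3, 3], ![2, 3, 2, 3, 3]]]

def binaryQuasigroup : Fin 5 → Fin 5 → Fin 5 :=
  ![![0, 3, 4, 2, 1], ![4, 1, 0, 3, 2], ![1, 2, 3, 0, 4], ![3, 4, 2, 1, 0], ![2, 0, 1, 4, 3]]

/-- The switching set containing each point; the label `2` marks points in none of them. -/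
def binaryLabel : Fin 5 → Fin 5 → Fin 3 :=
  ![![0, 2, 2, 2, 0], ![2, 1, 1, 2, 2], ![0, 2, 2, 0, 2], ![2, 2, 2, 0, 0], ![2, 1, 1, 2, 2]]

/-- A binary quasigroup in which `{0, 1}` is a subquasigroup. -/
def joiningQuasigroup : Fin 5 → Fin 5 → Fin 5 :=
  ![![0, 1, 3, 4, 2], ![1, 0, 4, 2, 3], ![3, 4, 2, 1, 0], ![4, 2, 0, 3, 1], ![2, 3, 1, 0, 4]]

theorem hasSwitchingFamily_three : HasSwitchingFamily (Fin 5) 0 1 (Fin 3) (Fin 3) := by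
  refine .of_label (f := fun z => ternaryQuasigroup (z 0) (z 1) (z 2)) ?_
    (fun z => ternaryLabel (z 0) (z 1) (z 2)) ?_ ?_
  · simp only [IsMultiQuasigroup, Fin.forall_fin_succ_pi, Fin.forall_fin_zero_pi]
    decide
  · simp only [IsSwitchingSet, MapsTo, mem_preimage, mem_singleton_iff, mem_insert_iff,
      Fin.forall_fin_succ_pi, Fin.forall_fin_zero_pi]
    decide
  · simp only [Fin.exists_fin_succ_pi, Fin.exists_fin_zero_pi]
    decide

theorem hasSwitchingFamily_two : HasSwitchingFamily (Fin 5) 0 1 (Fin 2) (Fin 2) := by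
  refine .of_label (f := fun z => binaryQuasigroup (z 0) (z 1)) ?_
    (fun z => binaryLabel (z 0) (z 1)) ?_ ?_
  · simp only [IsMultiQuasigroup, Fin.forall_fin_succ_pi, Fin.forall_fin_zero_pi]
    decide
  · simp only [IsSwitchingSet, MapsTo, mem_preimage, mem_singleton_iff, mem_insert_iff,
      Fin.forall_fin_succ_pi, Fin.forall_fin_zero_pi]
    decide
  · simp only [Fin.exists_fin_succ_pi, Fin.exists_fin_zero_pi]
    decide

theorem HasSwitchingFamily.add_mul {m m' n n' : ℕ}
    (h : HasSwitchingFamily (Fin 5) 0 1 (Fin m) (Fin n))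
    (h' : HasSwitchingFamily (Fin 5) 0 1 (Fin m') (Fin n')) :
    HasSwitchingFamily (Fin 5) 0 1 (Fin (m + m')) (Fin (n * n')) := by
  refine (h.sum (P := joiningQuasigroup) (by decide) (by decide) ?_ ?_ h').congr
    finSumFinEquiv finProdFinEquiv <;>
  · simp only [Set.ext_iff, mem_preimage, mem_insert_iff, mem_singleton_iff]
    decide

theorem hasSwitchingFamily_four : HasSwitchingFamily (Fin 5) 0 1 (Fin 4) (Fin 4) :=
  hasSwitchingFamily_two.add_mul hasSwitchingFamily_two

theorem HasSwitchingFamily.three_mul_add {r c : ℕ}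
    (h : HasSwitchingFamily (Fin 5) 0 1 (Fin r) (Fin c)) (k : ℕ) :
    HasSwitchingFamily (Fin 5) 0 1 (Fin (3 * k + r)) (Fin (3 ^ k * c)) := by
  induction k with
  | zero => simpa using h
  | succ k ih =>
    exact (hasSwitchingFamily_three.add_mul ih).congr (finCongr (by ring)) (finCongr (by ring))

theorem HasSwitchingFamily.two_pow_le_card {m n : ℕ}
    (h : HasSwitchingFamily (Fin 5) 0 1 (Fin m) (Fin n)) :
    2 ^ n ≤ Nat.card {f : (Fin m → Fin 5) → Fin 5 // IsMultiQuasigroup f} := by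
  simpa using h.two_pow_card_le (by decide)

/-- The number of m-ary quasigroups of order 5 is at least 2 ^ (3 ^ (m/3 - 0.072)),
with real exponentiation. -/
theorem stmt_10 (m : ℕ) (hm : 1 ≤ m) :
    (2 : ℝ) ^ ((3 : ℝ) ^ ((m : ℝ) / 3 - 0.072)) ≤
      (Nat.card {f : (Fin m → Fin 5) → Fin 5 // IsMultiQuasigroup f} : ℝ) := by
  suffices ∃ N : ℕ, (3 : ℝ) ^ ((m : ℝ) / 3 - 0.072) ≤ N ∧
      2 ^ N ≤ Nat.card {f : (Fin m → Fin 5) → Fin 5 // IsMultiQuasigroup f} by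
    obtain ⟨N, hN, hcard⟩ := this
    calc (2 : ℝ) ^ ((3 : ℝ) ^ ((m : ℝ) / 3 - 0.072)) ≤ 2 ^ (N : ℝ) :=
          Real.rpow_le_rpow_of_exponent_le one_le_two hN
      _ = ((2 ^ N : ℕ) : ℝ) := by norm_cast
      _ ≤ _ := by exact_mod_cast hcard
  obtain rfl | hm := hm.eq_or_lt
  · refine ⟨2, three_rpow_le_of_pow_le (by norm_num), ?_⟩
    calc 2 ^ 2 ≤ Nat.card (Equiv.Perm (Fin 5)) := by simp [Fintype.card_perm, Nat.factorial]
      _ ≤ _ := card_perm_le_card_unary (Fin 5)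
  obtain ⟨k, r, c, rfl, hrc, h⟩ : ∃ k r c : ℕ, m = 3 * k + r ∧
      (3 : ℝ) ^ ((r : ℝ) / 3 - 0.072) ≤ c ∧ HasSwitchingFamily (Fin 5) 0 1 (Fin r) (Fin c) := by
    obtain ⟨k, rfl | rfl | rfl⟩ : ∃ k, m = 3 * k + 2 ∨ m = 3 * k + 3 ∨ m = 3 * k + 4 :=
      ⟨(m - 2) / 3, by omega⟩
    exacts [⟨k, 2, 2, rfl, three_rpow_le_of_pow_le (by norm_num), hasSwitchingFamily_two⟩,
      ⟨k, 3, 3, rfl, three_rpow_le_of_pow_le (by norm_num), hasSwitchingFamily_three⟩,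
      ⟨k, 4, 4, rfl, three_rpow_le_of_pow_le (by norm_num), hasSwitchingFamily_four⟩]
  exact ⟨_, three_rpow_le_three_pow_mul k hrc, (h.three_mul_add k).two_pow_le_card⟩
end
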